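/- arXiv:1907.12167 — 9 statements merged into one kernel-verified Lean document; each statement's English description precedes it below -/
import Mathlib

section
/- Let P be a finite abelian p-group and H a finite p'-subgroup of Aut(P). Then P decomposes as the direct product P = [P,H] × C_P(H), where [P,H] is the commutator subgroup generated by elements x^{-1}·h(x) for x in P, h in H, and C_P(H) is the subgroup of fixed points of H. -/
/-!
The norm map `N x = ∏_{h ∈ H} h x` is a homomorphism of the abelian group `P` with values in
`C_P(H)` which kills every generator `x⁻¹ * h x` of `[P, H]`, and `N x ≡ x ^ |H|` modulo `[P, H]`.
As `x ↦ x ^ |H|` is bijective on `P`, every `x = y ^ |H|` is a product of an element of `[P, H]`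
and `N y ∈ C_P(H)`; and on `[P, H] ⊓ C_P(H)` the map `N` is both trivial and `x ↦ x ^ |H|`.
-/

/-- The subgroup of fixed points of a group `H` of automorphisms of `P`. -/
def fixedPointsSubgroup {P : Type*} [Group P] (H : Subgroup (MulAut P)) : Subgroup P where
  carrier := {x : P | ∀ h ∈ H, h x = x}
  one_mem' := by intro h _; simp
  mul_mem' := by
    intro a b ha hb h hh
    simp [map_mul, ha h hh, hb h hh]
  inv_mem' := by
    intro a ha h hh
    simp [map_inv, ha h hh]

/-- The subgroup `[P, H]` generated by the elements `x⁻¹ * h x`. -/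
def commutatorWithAut {P : Type*} [Group P] (H : Subgroup (MulAut P)) : Subgroup P :=
  Subgroup.closure {y : P | ∃ x : P, ∃ h ∈ H, y = x⁻¹ * h x}

section AutNorm

variable {P : Type*} [CommGroup P] (H : Subgroup (MulAut P)) [Fintype H]

def autNorm : P →* P where
  toFun x := ∏ h : H, (h : MulAut P) x
  map_one' := by simp
  map_mul' x y := by simp [map_mul, Finset.prod_mul_distrib]

lemma autNorm_apply (x : P) : autNorm H x = ∏ h : H, (h : MulAut P) x := rfl

lemma autNorm_mem_fixedPointsSubgroup (x : P) : autNorm H x ∈ fixedPointsSubgroup H := by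
  intro g hg
  have : g (autNorm H x) = ∏ h : H, ((⟨g, hg⟩ * h : H) : MulAut P) x := by
    simp [autNorm_apply, map_prod]
  rw [this]
  exact Equiv.prod_comp (Equiv.mulLeft (⟨g, hg⟩ : H)) (fun h : H => (h : MulAut P) x)

lemma autNorm_apply_aut {g : MulAut P} (hg : g ∈ H) (x : P) : autNorm H (g x) = autNorm H x :=
  Equiv.prod_comp (Equiv.mulRight (⟨g, hg⟩ : H)) (fun h : H => (h : MulAut P) x)

lemma commutatorWithAut_le_ker_autNorm : commutatorWithAut H ≤ (autNorm H).ker := by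
  rw [commutatorWithAut, Subgroup.closure_le]
  rintro _ ⟨x, g, hg, rfl⟩
  simp [autNorm_apply_aut H hg]

lemma autNorm_of_mem_fixedPointsSubgroup {x : P} (hx : x ∈ fixedPointsSubgroup H) :
    autNorm H x = x ^ Fintype.card H := by
  rw [autNorm_apply, Finset.prod_congr rfl fun h _ => hx _ h.2, Finset.prod_const,
    Finset.card_univ]

lemma inv_pow_card_mul_autNorm_mem_commutatorWithAut (x : P) :
    (x ^ Fintype.card H)⁻¹ * autNorm H x ∈ commutatorWithAut H := by
  have : (x ^ Fintype.card H)⁻¹ * autNorm H x = ∏ h : H, x⁻¹ * (h : MulAut P) x := by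
    rw [Finset.prod_mul_distrib, Finset.prod_const, Finset.card_univ, inv_pow, autNorm_apply]
  rw [this]
  exact Subgroup.prod_mem _ fun h _ => Subgroup.subset_closure ⟨x, h, h.2, rfl⟩

theorem commutatorWithAut_sup_fixedPointsSubgroup_eq_top
    (hH : (Nat.card P).Coprime (Fintype.card H)) :
    commutatorWithAut H ⊔ fixedPointsSubgroup H = ⊤ := by
  refine eq_top_iff.mpr fun x _ => ?_
  obtain ⟨y, rfl⟩ := hH.pow_left_bijective.surjective x
  have hy : y ^ Fintype.card H =
      ((y ^ Fintype.card H)⁻¹ * autNorm H y)⁻¹ * autNorm H y := by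
    rw [mul_inv_rev, inv_inv, mul_comm, mul_inv_cancel_left]
  change y ^ Fintype.card H ∈ _
  rw [hy]
  exact mul_mem (Subgroup.mem_sup_left (inv_mem
    (inv_pow_card_mul_autNorm_mem_commutatorWithAut H y)))
    (Subgroup.mem_sup_right (autNorm_mem_fixedPointsSubgroup H y))

theorem commutatorWithAut_inf_fixedPointsSubgroup_eq_bot
    (hH : (Nat.card P).Coprime (Fintype.card H)) :
    commutatorWithAut H ⊓ fixedPointsSubgroup H = ⊥ := by
  refine eq_bot_iff.mpr fun x ⟨hcomm, hfix⟩ => Subgroup.mem_bot.mpr ?_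
  have hpow : x ^ Fintype.card H = 1 ^ Fintype.card H := by
    rw [one_pow, ← autNorm_of_mem_fixedPointsSubgroup H hfix]
    exact commutatorWithAut_le_ker_autNorm H hcomm
  exact hH.pow_left_bijective.injective hpow

end AutNorm

/-- for a finite abelian `p`-group `P` and a finite `p'`-group `H` of
automorphisms of `P`, we have `P = [P, H] × C_P(H)`. -/
theorem stmt0 (p : ℕ) (hp : p.Prime) (P : Type*) [CommGroup P] [Fintype P]
    (hP : IsPGroup p P) (H : Subgroup (MulAut P)) [Fintype H]
    (hH : Nat.Coprime (Fintype.card H) p) :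
    commutatorWithAut H ⊔ fixedPointsSubgroup H = ⊤ ∧
      commutatorWithAut H ⊓ fixedPointsSubgroup H = ⊥ := by
  have := Fact.mk hp
  obtain ⟨k, hk⟩ := IsPGroup.iff_card.mp hP
  have hcard : (Nat.card P).Coprime (Fintype.card H) := hk ▸ hH.symm.pow_left k
  exact ⟨commutatorWithAut_sup_fixedPointsSubgroup_eq_top H hcard,
    commutatorWithAut_inf_fixedPointsSubgroup_eq_bot H hcard⟩
end

section
/- Let P be a finite abelian p-group and H a finite p'-subgroup of Aut(P). The induced action of H on the character group Irr(P) = Hom(P, ℂ^×) has a non-trivial fixed point if and only if the action of H on P has a non-trivial fixed point. -/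
/-!
Both directions go through the norm map `N x = ∏_{h ∈ H} h x`, an endomorphism of `P` that is
invariant under `H` on both sides. If `λ` is an `H`-invariant character then
`λ (N x) = λ (x ^ |H|)`, and if `x` is `H`-fixed then `N x = x ^ |H|`; since `|H|` is prime to
`p`, the `|H|`-th power map is a bijection of `P`. So a non-trivial fixed character `λ` yields the
non-trivial fixed point `N z` for `z ^ |H|` outside `ker λ`, and a non-trivial fixed point `x`
yields the non-trivial fixed character `μ ∘ N` for a character `μ` with `μ (x ^ |H|) ≠ 1`.
-/

namespace MulAut

variable {P : Type*} [CommGroup P] (H : Subgroup (MulAut P)) [Fintype H]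

def normHom : P →* P :=
  ∏ h : H, (h : MulAut P).toMonoidHom

theorem normHom_apply (x : P) : normHom H x = ∏ h : H, (h : MulAut P) x :=
  MonoidHom.finsetProd_apply _ _ _

variable {H}

theorem apply_normHom {g : MulAut P} (hg : g ∈ H) (x : P) : g (normHom H x) = normHom H x := by
  rw [normHom_apply, map_prod]
  exact Equiv.prod_comp (Equiv.mulLeft (⟨g, hg⟩ : H)) fun h : H => (h : MulAut P) x

theorem normHom_apply_apply {g : MulAut P} (hg : g ∈ H) (x : P) :
    normHom H (g x) = normHom H x := by
  simp only [normHom_apply]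
  exact Equiv.prod_comp (Equiv.mulRight (⟨g, hg⟩ : H)) fun h : H => (h : MulAut P) x

theorem normHom_apply_of_forall_apply_eq {x : P} (hx : ∀ h ∈ H, h x = x) :
    normHom H x = x ^ Fintype.card H := by
  rw [normHom_apply, Finset.prod_congr rfl fun h _ => hx h.1 h.2, Finset.prod_const,
    Finset.card_univ]

theorem map_normHom_of_forall_map_apply_eq {M : Type*} [CommMonoid M] {lam : P →* M}
    (hlam : ∀ h ∈ H, ∀ x, lam (h x) = lam x) (x : P) :
    lam (normHom H x) = lam (x ^ Fintype.card H) := by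
  rw [normHom_apply, map_prod, Finset.prod_congr rfl fun h _ => hlam h.1 h.2 x, Finset.prod_const,
    Finset.card_univ, map_pow]

end MulAut

open MulAut

theorem stmt1_general (p : ℕ) (P : Type*) [CommGroup P] [Fintype P]
    (hP : IsPGroup p P) (H : Subgroup (MulAut P)) [Fintype H]
    (hH : Nat.Coprime (Fintype.card H) p) :
    (∃ lam : P →* ℂˣ, lam ≠ 1 ∧ ∀ h ∈ H, ∀ x : P, lam (h x) = lam x) ↔
      (∃ x : P, x ≠ 1 ∧ ∀ h ∈ H, h x = x) := by
  let powEquiv := hP.powEquiv hH.symm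
  constructor
  · rintro ⟨lam, hlam, hfix⟩
    obtain ⟨y, hy⟩ : ∃ y, lam y ≠ 1 := by
      by_contra! h
      exact hlam (MonoidHom.ext h)
    obtain ⟨z, rfl⟩ := powEquiv.surjective y
    refine ⟨normHom H z, fun h1 => hy ?_, fun g hg => apply_normHom hg z⟩
    rw [← map_one lam, ← h1, map_normHom_of_forall_map_apply_eq hfix, hP.powEquiv_apply]
  · rintro ⟨x, hx, hfix⟩
    have : NeZero (Monoid.exponent P) := ⟨Monoid.exponent_ne_zero_of_finite⟩
    have hpow : x ^ Fintype.card H ≠ 1 := fun h1 =>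
      hx (powEquiv.injective (h1.trans (one_pow _).symm))
    obtain ⟨μ, hμ⟩ := CommGroup.exists_apply_ne_one_of_hasEnoughRootsOfUnity P ℂ hpow
    refine ⟨μ.comp (normHom H), fun h1 => hμ ?_, fun g hg y => ?_⟩
    · rw [← normHom_apply_of_forall_apply_eq hfix]
      exact DFunLike.congr_fun h1 x
    · simp only [MonoidHom.comp_apply, normHom_apply_apply hg]

/-- for a finite abelian `p`-group `P` and a finite `p'`-group `H ≤ Aut(P)`,
the action of `H` on the character group `Hom(P, ℂˣ)` has a non-trivial fixed point if and
only if the action of `H` on `P` does. -/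
theorem stmt1 (p : ℕ) (hp : p.Prime) (P : Type*) [CommGroup P] [Fintype P]
    (hP : IsPGroup p P) (H : Subgroup (MulAut P)) [Fintype H]
    (hH : Nat.Coprime (Fintype.card H) p) :
    (∃ lam : P →* ℂˣ, lam ≠ 1 ∧ ∀ h ∈ H, ∀ x : P, lam (h x) = lam x) ↔
      (∃ x : P, x ≠ 1 ∧ ∀ h ∈ H, h x = x) :=
  stmt1_general p P hP H hH
end

section
/- Let P be a finite abelian p-group and H a finite p'-subgroup of Aut(P) acting indecomposably on P (i.e., P admits no non-trivial H-invariant direct factor decomposition P = P₁ × P₂ with both factors non-trivial). If P is homocyclic, P ≅ (C_{p^n})^m, then the induced action of H on P/Φ(P) ≅ (C_p)^m is also indecomposable, where Φ(P) is the Frattini subgroup. -/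
/-!
Let `ε` be the projection of `P/Φ(P)` onto `Q₁` along `Q₂`: an idempotent commuting with `H`.
Since `P` is a free `ℤ/pⁿ`-module and `Φ(P) = Pᵖ`, `ε` lifts to an endomorphism of `P`, and
averaging over `H` (whose order is invertible mod `p`) makes the lift commute with `H`. Modulo the
ideal of endomorphisms with image in `Pᵖ`, whose elements are nilpotent because `P` has exponent
`pⁿ`, the lift is idempotent, so it can be corrected to an `H`-equivariant idempotent `E` of `P`.
Then `P = im E × ker E` is `H`-invariant, and the factors map onto `Q₁` and `Q₂`.
-/

/-- A group `H` of automorphisms of `P` acts *decomposably* if there is a non-trivial direct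
decomposition `P = P₁ × P₂` with both factors `H`-invariant. -/
def ActsDecomposably {P : Type*} [CommGroup P] (H : Subgroup (MulAut P)) : Prop :=
  ∃ P₁ P₂ : Subgroup P, P₁ ≠ ⊥ ∧ P₂ ≠ ⊥ ∧ P₁.IsComplement' P₂ ∧
    (∀ h ∈ H, ∀ x ∈ P₁, h x ∈ P₁) ∧ (∀ h ∈ H, ∀ x ∈ P₂, h x ∈ P₂)

theorem commute_sum_conj {R G : Type*} [Ring R] [Group G] [Fintype G] (τ : G →* R) (x : R)
    (h : G) : Commute (τ h) (∑ g, τ g * x * τ g⁻¹) := by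
  simp only [Commute, SemiconjBy, Finset.mul_sum, Finset.sum_mul]
  refine Fintype.sum_equiv (Equiv.mulLeft h) _ _ fun g => ?_
  simp only [Equiv.coe_mulLeft, mul_inv_rev, map_mul, ← mul_assoc]
  rw [mul_assoc _ (τ h⁻¹) (τ h), ← map_mul τ h⁻¹ h, inv_mul_cancel, map_one, mul_one]

namespace RingCon

variable (R A : Type*) [Ring R] [AddCommGroup A] [Module R A]

def modNSMul (p : ℕ) : RingCon R where
  r x y := ∀ a : A, ∃ b : A, (x - y) • a = p • b
  iseqv := by
    refine ⟨fun x a => ⟨0, by simp⟩, fun h a => ?_, fun h₁ h₂ a => ?_⟩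
    · obtain ⟨b, hb⟩ := h a
      exact ⟨-b, by rw [← neg_sub, neg_smul, hb, smul_neg]⟩
    · obtain ⟨b₁, hb₁⟩ := h₁ a
      obtain ⟨b₂, hb₂⟩ := h₂ a
      exact ⟨b₁ + b₂, by rw [← sub_add_sub_cancel, add_smul, hb₁, hb₂, smul_add]⟩
  add' {w x y z} h₁ h₂ a := by
    obtain ⟨b₁, hb₁⟩ := h₁ a
    obtain ⟨b₂, hb₂⟩ := h₂ a
    exact ⟨b₁ + b₂, by rw [add_sub_add_comm, add_smul, hb₁, hb₂, smul_add]⟩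
  mul' {w x y z} h₁ h₂ a := by
    obtain ⟨b₁, hb₁⟩ := h₁ (z • a)
    obtain ⟨b₂, hb₂⟩ := h₂ a
    refine ⟨b₁ + w • b₂, ?_⟩
    rw [show w * y - x * z = (w - x) * z + w * (y - z) by noncomm_ring, add_smul, mul_smul,
      mul_smul, hb₁, hb₂, smul_comm w p b₂, smul_add]

variable {R A}

theorem modNSMul_natCast_mul_gcdA (p q : ℕ) (hpq : q.Coprime p) :
    modNSMul R A p ((q : R) * (Nat.gcdA q p : R)) 1 := by
  intro a
  refine ⟨-(Nat.gcdB q p • a), ?_⟩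
  have h : ((q : ℤ) * Nat.gcdA q p - 1 : ℤ) = p * -Nat.gcdB q p := by
    have := Nat.gcd_eq_gcd_ab q p
    rw [hpq.gcd_eq_one] at this
    push_cast at this
    linarith
  have h' : ((q : R) * (Nat.gcdA q p : R) - 1) = (p : R) * ((-Nat.gcdB q p : ℤ) : R) := by
    exact_mod_cast congrArg (Int.cast : ℤ → R) h
  rw [h', mul_smul, Int.cast_smul_eq_zsmul, Nat.cast_smul_eq_nsmul, neg_smul]

theorem modNSMul_zero_pow {p : ℕ} {x : R} (hx : modNSMul R A p x 0) (k : ℕ) (a : A) :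
    ∃ b : A, (x ^ k) • a = p ^ k • b := by
  induction k generalizing a with
  | zero => exact ⟨a, by simp⟩
  | succ k ih =>
    obtain ⟨b, hb⟩ := hx a
    obtain ⟨c, hc⟩ := ih b
    rw [sub_zero] at hb
    exact ⟨c, by rw [pow_succ, mul_smul, hb, smul_comm, hc, smul_smul, pow_succ']⟩

variable [FaithfulSMul R A] {p n : ℕ}

theorem isNilpotent_of_modNSMul_zero (hA : ∀ a : A, p ^ n • a = 0) {x : R}
    (hx : modNSMul R A p x 0) : IsNilpotent x := by
  refine ⟨n, FaithfulSMul.eq_of_smul_eq_smul (α := A) fun a => ?_⟩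
  obtain ⟨b, hb⟩ := modNSMul_zero_pow hx n a
  rw [hb, hA, zero_smul]

theorem exists_isIdempotentElem_modNSMul (hA : ∀ a : A, p ^ n • a = 0) {x : R}
    (hx : modNSMul R A p (x * x) x) : ∃ e : R, IsIdempotentElem e ∧ modNSMul R A p e x := by
  set c := modNSMul R A p
  obtain ⟨e, he, hex⟩ := exists_isIdempotentElem_eq_of_ker_isNilpotent c.mk'
    (fun y hy => isNilpotent_of_modNSMul_zero hA (c.eq.mp (by simpa using hy)))
    (c.mk' x) ⟨x, rfl⟩ (by simpa [IsIdempotentElem, ← map_mul] using c.eq.mpr hx)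
  exact ⟨e, he, c.eq.mp hex⟩

theorem exists_isIdempotentElem_commute_modNSMul {G : Type*} [Group G] [Fintype G]
    (hG : (Fintype.card G).Coprime p) (hA : ∀ a : A, p ^ n • a = 0) (τ : G →* R) {x : R}
    (hx : modNSMul R A p (x * x) x) (hτ : ∀ g, modNSMul R A p (τ g * x * τ g⁻¹) x) :
    ∃ e : R, IsIdempotentElem e ∧ (∀ g, Commute (τ g) e) ∧ modNSMul R A p e x := by
  set c := modNSMul R A p
  set u : R := (Nat.gcdA (Fintype.card G) p : R)
  set y := u * ∑ g, τ g * x * τ g⁻¹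
  have hy_comm (h : G) : Commute (τ h) y :=
    ((Int.cast_commute _ _).symm).mul_right (commute_sum_conj τ x h)
  have hyx : c y x := by
    have hu : c.mk' (_ * u) = c.mk' 1 := c.eq.mpr (modNSMul_natCast_mul_gcdA (A := A) p _ hG)
    have hconj (g : G) : c.mk' (τ g * x * τ g⁻¹) = c.mk' x := c.eq.mpr (hτ g)
    refine c.eq.mp (show c.mk' y = c.mk' x from ?_)
    simp only [map_mul, map_one, map_natCast] at hu hconj
    simp only [y, map_mul, map_sum, hconj, Finset.sum_const, Finset.card_univ, nsmul_eq_mul]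
    rw [← mul_assoc, ← (Nat.cast_commute _ _).eq, hu, one_mul]
  have hyy : c (y * y) y := c.trans (c.mul hyx hyx) (c.trans hx (c.symm hyx))
  let S := Subring.centralizer (Set.range τ)
  have hyS : y ∈ S := Subring.mem_centralizer_iff.mpr (by
    rintro _ ⟨g, rfl⟩
    exact (hy_comm g).eq)
  obtain ⟨e, he, hey⟩ :=
    exists_isIdempotentElem_modNSMul (A := A) hA (x := (⟨y, hyS⟩ : S)) hyy
  refine ⟨e, congrArg Subtype.val he, fun g => ?_, c.trans hey hyx⟩
  exact Subring.mem_centralizer_iff.mp e.2 _ ⟨g, rfl⟩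

end RingCon

section Frattini

variable {G : Type*} [CommGroup G] {p : ℕ}

theorem pow_mem_frattini {n : ℕ} (hG : ∀ y : G, y ^ p ^ n = 1) (x : G) :
    x ^ p ∈ frattini G := by
  suffices ∀ M : Subgroup G, IsCoatom M → x ^ p ∈ M by
    simpa [frattini, Order.radical, Subgroup.mem_iInf] using this
  intro M hM
  by_contra hx
  have hsup : M ⊔ (powMonoidHom p).range = ⊤ :=
    hM.2 _ (left_lt_sup.mpr fun h => hx (h ⟨x, rfl⟩))
  have hpowM : M.map (powMonoidHom p) ≤ M :=
    Subgroup.map_le_iff_le_comap.mpr fun y hy => M.pow_mem hy p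
  have key (k : ℕ) : M ⊔ (powMonoidHom (p ^ k) : G →* G).range = ⊤ := by
    induction k with
    | zero => exact eq_top_iff.mpr (le_sup_of_le_right fun y _ => ⟨y, by simp⟩)
    | succ k ih =>
      have hcomp : (powMonoidHom (p ^ (k + 1)) : G →* G)
          = (powMonoidHom p).comp (powMonoidHom (p ^ k)) := by
        ext y; simp [pow_succ, pow_mul]
      refine eq_top_iff.mpr ?_
      calc ⊤ = M ⊔ (⊤ : Subgroup G).map (powMonoidHom p) := by
            rw [← MonoidHom.range_eq_map, hsup]
        _ = M ⊔ (M.map (powMonoidHom p) ⊔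
              (powMonoidHom (p ^ k)).range.map (powMonoidHom p)) := by
          rw [← ih, Subgroup.map_sup]
        _ ≤ M ⊔ (powMonoidHom (p ^ (k + 1)) : G →* G).range := by
          rw [hcomp, MonoidHom.range_comp]
          exact sup_le le_sup_left (sup_le (le_sup_of_le_left hpowM) le_sup_right)
  have hpn : (powMonoidHom (p ^ n) : G →* G) = 1 := MonoidHom.ext hG
  exact hM.1 (by simpa [hpn] using key n)

theorem frattini_eq_bot_of_pow_eq_one (hp : p.Prime) (hG : ∀ y : G, y ^ p = 1) :
    frattini G = ⊥ := by
  have := Fact.mk hp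
  -- `have` rather than `letI`: only the existence of the `ZMod p`-structure matters, and linear
  -- maps fail to elaborate against the unfolded `AddCommGroup.zmodModule`.
  have : Module (ZMod p) (Additive G) := AddCommGroup.zmodModule fun a => hG a.toMul
  have hbot : IsCoatom (⊥ : Subgroup (Multiplicative (ZMod p))) := by
    have : Fact (Nat.card (Multiplicative (ZMod p))).Prime := ⟨by simpa using hp⟩
    exact ⟨bot_ne_top, fun K hK => K.eq_bot_or_eq_top_of_prime_card.resolve_left hK.ne'⟩
  refine eq_bot_iff.mpr fun q hq => by_contra fun hq1 => ?_
  obtain ⟨f, hf⟩ : ∃ f : Additive G →ₗ[ZMod p] ZMod p, f (Additive.ofMul q) ≠ 0 := by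
    by_contra! h
    exact hq1 ((Module.forall_dual_apply_eq_zero_iff (ZMod p) (Additive.ofMul q)).mp h)
  let φ : G →* Multiplicative (ZMod p) := AddMonoidHom.toMultiplicativeRight f.toAddMonoidHom
  have hφ : Function.Surjective φ := LinearMap.surjective (f := f) (by rintro rfl; simp at hf)
  exact hf (frattini_le_coatom (Subgroup.isCoatom_comap_of_surjective hφ hbot) hq)

theorem frattini_eq_range_powMonoidHom (hp : p.Prime) {n : ℕ} (hG : ∀ y : G, y ^ p ^ n = 1) :
    frattini G = (powMonoidHom p).range := by
  refine le_antisymm ?_ (by rintro _ ⟨x, rfl⟩; exact pow_mem_frattini hG x)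
  set N := (powMonoidHom p : G →* G).range
  have hquot : ∀ e : G ⧸ N, e ^ p = 1 := by
    rintro ⟨x⟩
    exact (QuotientGroup.eq_one_iff _).mpr ⟨x, rfl⟩
  have := frattini_le_comap_frattini_of_surjective (QuotientGroup.mk'_surjective N)
  rwa [frattini_eq_bot_of_pow_eq_one hp hquot, MonoidHom.comap_bot, QuotientGroup.ker_mk'] at this

end Frattini

theorem pow_eq_one_of_mulEquiv_pi_zmod {P ι : Type*} [Monoid P] {N : ℕ}
    (e : P ≃* (ι → Multiplicative (ZMod N))) (y : P) : y ^ N = 1 := by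
  refine e.injective ?_
  ext j
  simp

theorem MonoidHom.exists_comp_eq_of_mulEquiv_pi_zmod {P G Q ι : Type*} [CommGroup P]
    [CommGroup G] [CommGroup Q] [Finite ι] {N : ℕ} (e : P ≃* (ι → Multiplicative (ZMod N)))
    (hG : ∀ y : G, y ^ N = 1) {π : G →* Q} (hπ : Function.Surjective π) (g : P →* Q) :
    ∃ f : P →* G, π.comp f = g := by
  have hQ (y : Q) : y ^ N = 1 := by
    obtain ⟨x, rfl⟩ := hπ y
    rw [← map_pow, hG, map_one]
  have : Module (ZMod N) (Additive G) := AddCommGroup.zmodModule fun a => hG a.toMul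
  have : Module (ZMod N) (Additive Q) := AddCommGroup.zmodModule fun a => hQ a.toMul
  let e' : (ι → ZMod N) ≃+ Additive P :=
    ((MulEquiv.toAdditive e).trans (AddEquiv.piAdditive _)).symm
  obtain ⟨f, hf⟩ := Module.projective_lifting_property (π.toAdditive.toZModLinearMap N)
    ((g.toAdditive.comp e'.toAddMonoidHom).toZModLinearMap N) hπ
  refine ⟨MonoidHom.toAdditive.symm (f.toAddMonoidHom.comp e'.symm.toAddMonoidHom), ?_⟩
  ext x
  simpa using congr($hf (e'.symm (Additive.ofMul x)))

theorem modNSMul_monoidEndToAdditive_iff {P : Type*} [CommGroup P] {p n : ℕ} (hp : p.Prime)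
    (hP : ∀ y : P, y ^ p ^ n = 1) {f g : Monoid.End P} :
    RingCon.modNSMul (AddMonoid.End (Additive P)) (Additive P) p
      (monoidEndToAdditive P f) (monoidEndToAdditive P g) ↔
      ∀ x, (f x : P ⧸ frattini P) = g x := by
  simp only [frattini_eq_range_powMonoidHom hp hP, QuotientGroup.eq_iff_div_mem]
  exact forall_congr' fun _ => exists_congr fun _ => eq_comm

namespace Subgroup.IsComplement'

variable {G : Type*} [CommGroup G] {K L : Subgroup G}

noncomputable def prodMulEquiv (h : K.IsComplement' L) : K × L ≃* G :=
  MulEquiv.ofBijective (K.subtype.coprod L.subtype) h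

noncomputable def projection (h : K.IsComplement' L) : G →* G :=
  K.subtype.comp ((MonoidHom.fst K L).comp h.prodMulEquiv.symm.toMonoidHom)

theorem projection_eq_of_mem (h : K.IsComplement' L) {g a : G} (ha : a ∈ K)
    (hga : a⁻¹ * g ∈ L) : h.projection g = a := by
  have : h.prodMulEquiv.symm g = (⟨a, ha⟩, ⟨a⁻¹ * g, hga⟩) := by
    rw [MulEquiv.symm_apply_eq]
    exact (mul_inv_cancel_left a g).symm
  simp [projection, this]

theorem projection_mem (h : K.IsComplement' L) (g : G) : h.projection g ∈ K := by
  simp [projection]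

theorem inv_projection_mul_mem (h : K.IsComplement' L) (g : G) :
    (h.projection g)⁻¹ * g ∈ L := by
  obtain ⟨⟨a, b⟩, rfl⟩ := h.prodMulEquiv.surjective g
  have : (a : G)⁻¹ * h.prodMulEquiv (a, b) = b := inv_mul_cancel_left (a : G) b
  simp [projection, this]

theorem projection_eq_self (h : K.IsComplement' L) {g : G} (hg : g ∈ K) : h.projection g = g :=
  h.projection_eq_of_mem hg (by simp)

theorem projection_eq_one (h : K.IsComplement' L) {g : G} (hg : g ∈ L) : h.projection g = 1 :=
  h.projection_eq_of_mem K.one_mem (by simpa using hg)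

theorem projection_comp_self (h : K.IsComplement' L) :
    h.projection.comp h.projection = h.projection :=
  MonoidHom.ext fun g => h.projection_eq_self (h.projection_mem g)

theorem range_projection (h : K.IsComplement' L) : MonoidHom.range h.projection = K :=
  le_antisymm (by rintro _ ⟨g, rfl⟩; exact h.projection_mem g)
    fun g hg => ⟨g, h.projection_eq_self hg⟩

theorem ker_projection (h : K.IsComplement' L) : MonoidHom.ker h.projection = L :=
  le_antisymm (fun g hg => by simpa [MonoidHom.mem_ker.mp hg] using h.inv_projection_mul_mem g)
    fun g hg => h.projection_eq_one hg

end Subgroup.IsComplement'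

namespace MonoidHom

theorem isComplement'_range_ker_of_comp_self {G : Type*} [CommGroup G] {f : G →* G}
    (hf : f.comp f = f) : f.range.IsComplement' f.ker := by
  have hff (g : G) : f (f g) = f g := DFunLike.congr_fun hf g
  refine Subgroup.isComplement_iff_existsUnique.mpr fun g =>
    ⟨(⟨f g, g, rfl⟩, ⟨(f g)⁻¹ * g, ?_⟩), ?_, ?_⟩
  · simp [hff]
  · simp
  · rintro ⟨⟨_, a, rfl⟩, ⟨b, hb : f b = 1⟩⟩ rfl
    ext <;> simp [hff, hb]

theorem map_range_of_comp_eq {G Q : Type*} [Group G] [Group Q] {π : G →* Q}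
    (hπ : Function.Surjective π) {f : G →* G} {ε : Q →* Q}
    (h : π.comp f = ε.comp π) : f.range.map π = ε.range := by
  rw [← MonoidHom.range_comp, h, MonoidHom.range_comp, MonoidHom.range_eq_top.mpr hπ,
    ← MonoidHom.range_eq_map]

theorem map_ker_of_comp_eq {G Q : Type*} [Group G] [Group Q] {π : G →* Q}
    (hπ : Function.Surjective π) {f : G →* G} (hf : f.comp f = f) {ε : Q →* Q}
    (h : π.comp f = ε.comp π) : f.ker.map π = ε.ker := by
  have hf' (g : G) : f (f g) = f g := DFunLike.congr_fun hf g
  have h' (g : G) : π (f g) = ε (π g) := DFunLike.congr_fun h g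
  refine le_antisymm ?_ fun q hq => ?_
  · rintro _ ⟨g, hg, rfl⟩
    rw [mem_ker, ← h', mem_ker.mp hg, map_one]
  · obtain ⟨g, rfl⟩ := hπ q
    refine ⟨(f g)⁻¹ * g, by simp [hf'], ?_⟩
    rw [map_mul, map_inv, h', mem_ker.mp hq, inv_one, one_mul]

end MonoidHom

theorem exists_equivariant_idempotent_lift {P ι : Type*} [CommGroup P] [Finite ι] {p n : ℕ}
    (hp : p.Prime) (e : P ≃* (ι → Multiplicative (ZMod (p ^ n)))) (H : Subgroup (MulAut P))
    [Fintype H] (hH : (Fintype.card H).Coprime p) {ε : P ⧸ frattini P →* P ⧸ frattini P}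
    (hε : ε.comp ε = ε)
    (hεH : ∀ h ∈ H, ∀ x y : P, ε x = y → ε (h x) = (h y : P ⧸ frattini P)) :
    ∃ E : P →* P, E.comp E = E ∧ (∀ h ∈ H, ∀ x, E (h x) = h (E x)) ∧
      (QuotientGroup.mk' (frattini P)).comp E = ε.comp (QuotientGroup.mk' (frattini P)) := by
  have hexp := pow_eq_one_of_mulEquiv_pi_zmod e
  set π := QuotientGroup.mk' (frattini P)
  set c := RingCon.modNSMul (AddMonoid.End (Additive P)) (Additive P) p
  have hcongr (f g : Monoid.End P) :
      c (monoidEndToAdditive P f) (monoidEndToAdditive P g) ↔ ∀ x, π (f x) = π (g x) :=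
    modNSMul_monoidEndToAdditive_iff hp hexp
  obtain ⟨F₀, hF₀⟩ := MonoidHom.exists_comp_eq_of_mulEquiv_pi_zmod e hexp
    (QuotientGroup.mk'_surjective _) (ε.comp π)
  let F : Monoid.End P := F₀
  have hF (x : P) : π (F x) = ε (π x) := DFunLike.congr_fun hF₀ x
  let τ' : H →* Monoid.End P := (MulDistribMulAction.toMonoidEnd (MulAut P) P).comp H.subtype
  let τ : H →* AddMonoid.End (Additive P) := (monoidEndToAdditive P).toMonoidHom.comp τ'
  have hF_idem : c (monoidEndToAdditive P F * monoidEndToAdditive P F)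
      (monoidEndToAdditive P F) := by
    rw [← map_mul, hcongr]
    intro x
    change π (F (F x)) = π (F x)
    rw [hF, hF, ← MonoidHom.comp_apply, hε]
  have hF_conj (g : H) :
      c (τ g * monoidEndToAdditive P F * τ g⁻¹) (monoidEndToAdditive P F) := by
    change c (monoidEndToAdditive P (τ' g) * _ * monoidEndToAdditive P (τ' g⁻¹)) _
    rw [← map_mul, ← map_mul, hcongr]
    intro x
    have := hεH g g.2 _ _ (hF ((g : MulAut P)⁻¹ x)).symm
    change π ((g : MulAut P) (F ((g : MulAut P)⁻¹ x))) = π (F x)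
    rw [MulAut.apply_inv_self] at this
    exact this.symm.trans (hF x).symm
  obtain ⟨E, hE, hEτ, hEF⟩ := RingCon.exists_isIdempotentElem_commute_modNSMul hH
    (fun a => hexp a.toMul) τ hF_idem hF_conj
  refine ⟨(monoidEndToAdditive P).symm E, ?_, fun h hh x => ?_, ?_⟩
  · exact (map_mul (monoidEndToAdditive P).symm E E).symm.trans (congrArg _ hE)
  · exact (DFunLike.congr_fun (hEτ ⟨h, hh⟩) (Additive.ofMul x)).symm
  · rw [← MulEquiv.apply_symm_apply (monoidEndToAdditive P) E, hcongr] at hEF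
    ext x
    exact (hEF x).trans (hF x)

theorem stmt2_general (p : ℕ) (hp : p.Prime) (m n : ℕ)
    (P : Type*) [CommGroup P]
    (hhomo : Nonempty (P ≃* (Fin m → Multiplicative (ZMod (p ^ n)))))
    (H : Subgroup (MulAut P)) [Fintype H] (hH : Nat.Coprime (Fintype.card H) p)
    (hindec : ¬ ActsDecomposably H) :
    ¬ ∃ Q₁ Q₂ : Subgroup (P ⧸ frattini P), Q₁ ≠ ⊥ ∧ Q₂ ≠ ⊥ ∧ Q₁.IsComplement' Q₂ ∧
      (∀ h ∈ H, ∀ x : P, (x : P ⧸ frattini P) ∈ Q₁ → ((h x : P) : P ⧸ frattini P) ∈ Q₁) ∧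
      (∀ h ∈ H, ∀ x : P, (x : P ⧸ frattini P) ∈ Q₂ → ((h x : P) : P ⧸ frattini P) ∈ Q₂) := by
  rintro ⟨Q₁, Q₂, hQ₁, hQ₂, hc, hinv₁, hinv₂⟩
  obtain ⟨ι⟩ := hhomo
  have hεH (h) (hh : h ∈ H) (x y : P) (hxy : hc.projection x = y) :
      hc.projection (h x) = (h y : P ⧸ frattini P) := by
    refine hc.projection_eq_of_mem (hinv₁ h hh y (hxy ▸ hc.projection_mem _)) ?_
    have := hinv₂ h hh (y⁻¹ * x) (by
      rw [QuotientGroup.mk_mul, QuotientGroup.mk_inv, ← hxy]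
      exact hc.inv_projection_mul_mem _)
    rwa [map_mul, map_inv, QuotientGroup.mk_mul, QuotientGroup.mk_inv] at this
  obtain ⟨E, hE, hEH, hEπ⟩ := exists_equivariant_idempotent_lift hp ι H hH
    hc.projection_comp_self hεH
  have hπ := QuotientGroup.mk'_surjective (frattini P)
  refine hindec ⟨E.range, E.ker, fun h => hQ₁ ?_, fun h => hQ₂ ?_,
    MonoidHom.isComplement'_range_ker_of_comp_self hE, ?_, ?_⟩
  · rw [← hc.range_projection, ← MonoidHom.map_range_of_comp_eq hπ hEπ, h, Subgroup.map_bot]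
  · rw [← hc.ker_projection, ← MonoidHom.map_ker_of_comp_eq hπ hE hEπ, h, Subgroup.map_bot]
  · rintro h hh _ ⟨x, rfl⟩
    exact ⟨h x, hEH h hh x⟩
  · intro h hh x hx
    rw [MonoidHom.mem_ker, hEH h hh, MonoidHom.mem_ker.mp hx, map_one]

/-- if a `p'`-group `H ≤ Aut(P)` acts indecomposably on the homocyclic
abelian `p`-group `P ≅ (C_{p^n})^m`, then the induced action of `H` on `P/Φ(P)` is also
indecomposable. -/
theorem stmt2 (p : ℕ) (hp : p.Prime) (m n : ℕ) (hm : 0 < m) (hn : 0 < n)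
    (P : Type*) [CommGroup P] [Fintype P]
    (hhomo : Nonempty (P ≃* (Fin m → Multiplicative (ZMod (p ^ n)))))
    (H : Subgroup (MulAut P)) [Fintype H] (hH : Nat.Coprime (Fintype.card H) p)
    (hindec : ¬ ActsDecomposably H) :
    ¬ ∃ Q₁ Q₂ : Subgroup (P ⧸ frattini P), Q₁ ≠ ⊥ ∧ Q₂ ≠ ⊥ ∧ Q₁.IsComplement' Q₂ ∧
      (∀ h ∈ H, ∀ x : P, (x : P ⧸ frattini P) ∈ Q₁ → ((h x : P) : P ⧸ frattini P) ∈ Q₁) ∧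
      (∀ h ∈ H, ∀ x : P, (x : P ⧸ frattini P) ∈ Q₂ → ((h x : P) : P ⧸ frattini P) ∈ Q₂) :=
  stmt2_general p hp m n P hhomo H hH hindec
end

section
/- Let P be a finite abelian group of exponent dividing p^n, let O be a complete discrete valuation ring of characteristic 0 with residue field of characteristic p, and let J_O(P) be the augmentation ideal of OP. Then for every x ∈ J_O(P), one has x^{p^n} ∈ p·J_O(P). -/
/-!
Write `q = p ^ n` and `ε` for the augmentation. Modulo `p`, raising to the power `q` is
additive, so it suffices to check `x ^ q ≡ (ε x) ^ q` on the basis elements `a • g` of `O[P]`,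
where it is `a ^ q • g ^ q = a ^ q`.
For `x` in the augmentation ideal this gives `x ^ q = p * y`, and replacing `y` by `y - ε y`
moves `y` into the augmentation ideal, because `p * ε y = ε (x ^ q) = 0`.
-/

open MonoidAlgebra

section Augmented

variable {R A : Type*} [CommRing R] [CommRing A] [Algebra R A] (ε : A →ₐ[R] R)

theorem exists_add_pow_prime_pow_eq_algebraMap {p : ℕ} (hp : p.Prime) (n : ℕ) {x x' : A}
    (hx : ∃ y, x ^ p ^ n = algebraMap R A (ε x ^ p ^ n) + p * y)
    (hx' : ∃ y, x' ^ p ^ n = algebraMap R A (ε x' ^ p ^ n) + p * y) :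
    ∃ y, (x + x') ^ p ^ n = algebraMap R A (ε (x + x') ^ p ^ n) + p * y := by
  obtain ⟨y, hy⟩ := hx
  obtain ⟨y', hy'⟩ := hx'
  obtain ⟨r, hr⟩ : ∃ r : A, (x + x') ^ p ^ n = x ^ p ^ n + x' ^ p ^ n + p * r :=
    ⟨_, add_pow_prime_pow_eq' hp x x' n⟩
  obtain ⟨s, hs⟩ : ∃ s : R, (ε x + ε x') ^ p ^ n = ε x ^ p ^ n + ε x' ^ p ^ n + p * s :=
    ⟨_, add_pow_prime_pow_eq' hp (ε x) (ε x') n⟩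
  refine ⟨y + y' + r - algebraMap R A s, ?_⟩
  have hs' := congrArg (algebraMap R A) hs
  simp only [map_add, map_mul, map_pow, map_natCast] at hy hy' hs' ⊢
  linear_combination hr + hy + hy' - hs'

theorem AlgHom.exists_mem_ker_natCast_mul_eq {m : ℕ} {z y : A} (hz : ε z = 0)
    (hzy : z = m * y) : ∃ y' ∈ RingHom.ker ε, z = m * y' := by
  have hmy : (m : R) * ε y = 0 := by simpa [hzy] using hz
  refine ⟨y - algebraMap R A (ε y), by simp, ?_⟩
  have := congrArg (algebraMap R A) hmy
  simp only [map_mul, map_natCast, map_zero] at this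
  linear_combination hzy + this

end Augmented

theorem MonoidAlgebra.exists_pow_prime_pow_eq_algebraMap {R G : Type*} [CommRing R]
    [CommMonoid G] {p : ℕ} (hp : p.Prime) (n : ℕ) (hG : ∀ g : G, g ^ p ^ n = 1) (x : R[G]) :
    ∃ y, x ^ p ^ n = algebraMap R R[G] (lift R R G 1 x ^ p ^ n) + p * y := by
  induction x using MonoidAlgebra.induction_linear with
  | zero => exact ⟨0, by simp [zero_pow (pow_ne_zero n hp.ne_zero)]⟩
  | add x x' hx hx' => exact exists_add_pow_prime_pow_eq_algebraMap _ hp n hx hx'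
  | single g a => exact ⟨0, by simp [single_pow, hG, lift_single, coe_algebraMap]⟩

theorem stmt6_general (p n : ℕ) (hp : p.Prime) (O : Type*) [CommRing O]
    (P : Type*) [CommGroup P] (hP : ∀ x : P, x ^ (p ^ n) = 1) :
    ∀ x ∈ RingHom.ker ((MonoidAlgebra.lift O O P) 1).toRingHom,
      ∃ y ∈ RingHom.ker ((MonoidAlgebra.lift O O P) 1).toRingHom,
        x ^ (p ^ n) = (p : MonoidAlgebra O P) * y := by
  intro x hx
  have hεx : lift O O P 1 x = 0 := hx
  have hq : p ^ n ≠ 0 := pow_ne_zero n hp.ne_zero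
  obtain ⟨y, hy⟩ := exists_pow_prime_pow_eq_algebraMap hp n hP x
  rw [hεx, zero_pow hq, map_zero, zero_add] at hy
  exact (lift O O P 1).exists_mem_ker_natCast_mul_eq (by rw [map_pow, hεx, zero_pow hq]) hy

/-- let `P` be a finite abelian group of exponent dividing `p^n` and `O` a
complete discrete valuation ring of characteristic `0` and residue characteristic `p`.
Then every element `x` of the augmentation ideal `J_O(P)` of `OP` satisfies
`x ^ (p ^ n) ∈ p · J_O(P)`. -/
theorem stmt6 (p n : ℕ) (hp : p.Prime) (O : Type*) [CommRing O] [IsDomain O]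
    [IsDiscreteValuationRing O] [CharZero O]
    [IsAdicComplete (IsLocalRing.maximalIdeal O) O]
    (hpO : ¬ IsUnit (p : O))
    (P : Type*) [CommGroup P] [Fintype P] (hP : ∀ x : P, x ^ (p ^ n) = 1) :
    ∀ x ∈ RingHom.ker ((MonoidAlgebra.lift O O P) 1).toRingHom,
      ∃ y ∈ RingHom.ker ((MonoidAlgebra.lift O O P) 1).toRingHom,
        x ^ (p ^ n) = (p : MonoidAlgebra O P) * y :=
  stmt6_general p n hp O P hP
end

section
/- Let P = ⟨x⟩ be a cyclic group of order p^n and R any commutative ring. In the group ring RP, (1 - x)^{p^n - 1} ≡ 1 + x + x² + ... + x^{p^n - 1} modulo p·RP, and consequently (1 - x)^{p^n} ∈ p·(1 - x)·RP. -/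
/-!
Modulo `p` the Frobenius gives `(1 - X)^{p^n} = 1 - X^{p^n} = (1 - X)(1 + X + ⋯ + X^{p^n - 1})`
in `𝔽_p[X]`, and cancelling the non-zero-divisor `1 - X` yields the congruence as an identity
in `ℤ[X]` up to a multiple of `p`; it then specialises to any element of any commutative ring.
When `x^{p^n} = 1`, multiplying it by `1 - x` kills the geometric sum.
-/

open Polynomial

theorem Polynomial.one_sub_X_pow_prime_pow_sub_one {K : Type*} [CommRing K] [IsDomain K]
    (p : ℕ) [Fact p.Prime] [CharP K p] (n : ℕ) :
    (1 - X : K[X]) ^ (p ^ n - 1) = ∑ i ∈ Finset.range (p ^ n), X ^ i := by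
  have hpos : 0 < p ^ n := pow_pos (Fact.out : p.Prime).pos n
  have hne : (1 - X : K[X]) ≠ 0 := by
    rw [← neg_sub, neg_ne_zero, ← C_1]
    exact X_sub_C_ne_zero 1
  refine mul_left_cancel₀ hne ?_
  rw [mul_neg_geom_sum, ← pow_succ', Nat.sub_add_cancel hpos, sub_pow_char_pow, one_pow]

theorem Polynomial.exists_one_sub_X_pow_prime_pow_sub_one_eq_geom_sum_add {p : ℕ} (hp : p.Prime)
    (n : ℕ) : ∃ g : ℤ[X],
      (1 - X : ℤ[X]) ^ (p ^ n - 1) = ∑ i ∈ Finset.range (p ^ n), X ^ i + (p : ℤ[X]) * g := by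
  have := Fact.mk hp
  set q : ℤ[X] := (1 - X) ^ (p ^ n - 1) - ∑ i ∈ Finset.range (p ^ n), X ^ i
  have hq : q ∈ RingHom.ker (mapRingHom (Int.castRingHom (ZMod p))) := by
    simp [q, RingHom.mem_ker, Polynomial.map_sum, one_sub_X_pow_prime_pow_sub_one]
  rw [ker_mapRingHom, ZMod.ker_intCastRingHom, Ideal.map_span, Set.image_singleton,
    Ideal.mem_span_singleton, map_natCast] at hq
  obtain ⟨g, hg⟩ := hq
  exact ⟨g, by rw [← hg]; ring⟩

theorem exists_one_sub_pow_prime_pow_sub_one_eq_geom_sum_add {A : Type*} [CommRing A] {p : ℕ}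
    (hp : p.Prime) (n : ℕ) (a : A) : ∃ y : A,
      (1 - a) ^ (p ^ n - 1) = ∑ i ∈ Finset.range (p ^ n), a ^ i + (p : A) * y := by
  obtain ⟨g, hg⟩ := exists_one_sub_X_pow_prime_pow_sub_one_eq_geom_sum_add hp n
  refine ⟨aeval a g, ?_⟩
  simpa using congrArg (aeval a) hg

theorem exists_one_sub_pow_prime_pow_eq_mul {A : Type*} [CommRing A] {p : ℕ} (hp : p.Prime)
    {n : ℕ} {a : A} (ha : a ^ p ^ n = 1) : ∃ z : A, (1 - a) ^ (p ^ n) = p * (1 - a) * z := by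
  obtain ⟨y, hy⟩ := exists_one_sub_pow_prime_pow_sub_one_eq_geom_sum_add hp n a
  refine ⟨y, ?_⟩
  rw [← Nat.sub_add_cancel (pow_pos hp.pos n), pow_succ', hy, mul_add, mul_neg_geom_sum, ha]
  ring

theorem stmt7_general (p n : ℕ) (hp : p.Prime) (R : Type*) [CommRing R]
    (P : Type*) [CommGroup P] (x : P)
    (hord : orderOf x = p ^ n) :
    (∃ y : MonoidAlgebra R P,
        ((1 : MonoidAlgebra R P) - MonoidAlgebra.single x 1) ^ (p ^ n - 1) =
          (∑ i ∈ Finset.range (p ^ n), (MonoidAlgebra.single x (1 : R)) ^ i)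
            + (p : MonoidAlgebra R P) * y) ∧
      ∃ z : MonoidAlgebra R P,
        ((1 : MonoidAlgebra R P) - MonoidAlgebra.single x 1) ^ (p ^ n) =
          (p : MonoidAlgebra R P) * ((1 : MonoidAlgebra R P) - MonoidAlgebra.single x 1) * z := by
  have hx : (MonoidAlgebra.single x (1 : R)) ^ p ^ n = 1 := by
    rw [MonoidAlgebra.single_pow, one_pow, ← hord, pow_orderOf_eq_one]
    rfl
  exact ⟨exists_one_sub_pow_prime_pow_sub_one_eq_geom_sum_add hp n _,
    exists_one_sub_pow_prime_pow_eq_mul hp hx⟩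

/-- for `P = ⟨x⟩ ≅ C_{p^n}` and any commutative ring `R`, in the group ring
`RP` one has `(1 - x)^{p^n - 1} ≡ 1 + x + ⋯ + x^{p^n - 1} (mod p·RP)`, and consequently
`(1 - x)^{p^n} ∈ p·(1 - x)·RP`. -/
theorem stmt7 (p n : ℕ) (hp : p.Prime) (R : Type*) [CommRing R]
    (P : Type*) [CommGroup P] [Fintype P] (x : P)
    (hord : orderOf x = p ^ n) (hgen : Subgroup.zpowers x = (⊤ : Subgroup P)) :
    (∃ y : MonoidAlgebra R P,
        ((1 : MonoidAlgebra R P) - MonoidAlgebra.single x 1) ^ (p ^ n - 1) =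
          (∑ i ∈ Finset.range (p ^ n), (MonoidAlgebra.single x (1 : R)) ^ i)
            + (p : MonoidAlgebra R P) * y) ∧
      ∃ z : MonoidAlgebra R P,
        ((1 : MonoidAlgebra R P) - MonoidAlgebra.single x 1) ^ (p ^ n) =
          (p : MonoidAlgebra R P) * ((1 : MonoidAlgebra R P) - MonoidAlgebra.single x 1) * z :=
  stmt7_general p n hp R P x hord
end

section
/- Let p = 2, let P be an elementary abelian 2-group with basis x₁,...,x_m, and O a complete discrete valuation ring of characteristic 0 with residue field of characteristic 2. For any a₁,...,a_m ∈ OP, one has (a₁(1-x₁) + ... + a_m(1-x_m))² ≡ 2a₁²(1-x₁) + ... + 2a_m²(1-x_m) modulo 2·J_{O,2}(P), where J_{O,2}(P) is the preimage in the augmentation ideal J_O(P) of J²(kP) under reduction to the residue field k. -/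
/-!
Because `xᵢ² = 1`, we have `(1 - xᵢ)² = 2(1 - xᵢ)`, so the diagonal terms of the square are
exactly `2aᵢ²(1 - xᵢ)`. The cross terms come in pairs, giving `2w` with `w` a sum of products of
two elements of `J_O(P)`, and such a product lies in `J_{O,2}(P)` because reduction to the
residue field maps `J_O(P)` into `J(kP)`.
-/

open MonoidAlgebra

namespace MonoidAlgebra

variable {R S G : Type*} [CommRing R] [CommRing S] [CommMonoid G]

variable (R G) in
noncomputable def augmentationIdeal : Ideal R[G] := RingHom.ker (lift R R G 1).toRingHom

theorem one_sub_single_one_mem_augmentationIdeal (g : G) :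
    1 - single g (1 : R) ∈ augmentationIdeal R G := by
  simp [augmentationIdeal, lift_single]

theorem lift_one_mapRingHom (f : R →+* S) (y : R[G]) :
    lift S S G 1 (mapRingHom G f y) = f (lift R R G 1 y) := by
  induction y using induction_linear with
  | zero => simp
  | add u v hu hv => simp only [map_add, hu, hv]
  | single g c => simp [lift_single]

theorem mapRingHom_mem_augmentationIdeal (f : R →+* S) {y : R[G]}
    (hy : y ∈ augmentationIdeal R G) : mapRingHom G f y ∈ augmentationIdeal S G := by
  simp_all [augmentationIdeal, lift_one_mapRingHom]

variable (R G) in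
/-- The ideal `J_{O,2}(G)` of the paper. -/
noncomputable def augmentationIdealTwo [IsLocalRing R] : Ideal R[G] :=
  augmentationIdeal R G ⊓
    (augmentationIdeal (IsLocalRing.ResidueField R) G * augmentationIdeal _ G).comap
      (mapRingHom G (IsLocalRing.residue R))

theorem mul_mem_augmentationIdealTwo [IsLocalRing R] {y z : R[G]}
    (hy : y ∈ augmentationIdeal R G) (hz : z ∈ augmentationIdeal R G) :
    y * z ∈ augmentationIdealTwo R G := by
  refine ⟨Ideal.mul_mem_right z _ hy, Ideal.mem_comap.2 ?_⟩
  rw [map_mul]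
  exact Ideal.mul_mem_mul (mapRingHom_mem_augmentationIdeal _ hy)
    (mapRingHom_mem_augmentationIdeal _ hz)

theorem single_one_mul_self_of_mul_self_eq_one {g : G} (hg : g * g = 1) :
    single g (1 : R) * single g 1 = 1 := by
  rw [single_mul_single, hg, mul_one, one_def]

end MonoidAlgebra

theorem one_sub_mul_self_of_mul_self_eq_one {R : Type*} [Ring R] {x : R} (hx : x * x = 1) :
    (1 - x) * (1 - x) = 2 * (1 - x) := by
  noncomm_ring [hx]

theorem exists_mem_sq_sum_eq_sum_sq_add_two_mul {ι R : Type*} [CommSemiring R]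
    (K : Ideal R) (s : Finset ι) (t : ι → R) (ht : ∀ i ∈ s, ∀ j ∈ s, i ≠ j → t i * t j ∈ K) :
    ∃ w ∈ K, (∑ i ∈ s, t i) ^ 2 = ∑ i ∈ s, t i ^ 2 + 2 * w := by
  classical
  induction s using Finset.induction_on with
  | empty => exact ⟨0, K.zero_mem, by simp⟩
  | insert a s ha ih =>
    obtain ⟨w, hw, hsq⟩ := ih fun i hi j hj =>
      ht i (Finset.mem_insert_of_mem hi) j (Finset.mem_insert_of_mem hj)
    refine ⟨w + t a * ∑ i ∈ s, t i, K.add_mem hw ?_, ?_⟩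
    · rw [Finset.mul_sum]
      exact K.sum_mem fun j hj => ht a (Finset.mem_insert_self a s) j
        (Finset.mem_insert_of_mem hj) (ne_of_mem_of_not_mem hj ha).symm
    · rw [Finset.sum_insert ha, Finset.sum_insert ha, add_sq, hsq]
      ring

theorem stmt8_general (m : ℕ) (O : Type*) [CommRing O] [IsDomain O] [IsDiscreteValuationRing O] :
    ∀ a : Fin m → MonoidAlgebra O (Fin m → Multiplicative (ZMod 2)),
      let P := Fin m → Multiplicative (ZMod 2)
      let x : Fin m → P := fun i => Pi.mulSingle i (Multiplicative.ofAdd (1 : ZMod 2))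
      let X : Fin m → MonoidAlgebra O P := fun i => MonoidAlgebra.single (x i) (1 : O)
      let k := IsLocalRing.ResidueField O
      let Jk : Ideal (MonoidAlgebra k P) :=
        RingHom.ker ((MonoidAlgebra.lift k k P) 1).toRingHom
      ∃ w : MonoidAlgebra O P,
        w ∈ RingHom.ker ((MonoidAlgebra.lift O O P) 1).toRingHom ∧
        (MonoidAlgebra.ofCoeff (Finsupp.mapRange (IsLocalRing.residue O) (map_zero _) w.coeff) : MonoidAlgebra k P)
            ∈ Jk * Jk ∧
        (∑ i, a i * ((1 : MonoidAlgebra O P) - X i)) ^ 2 =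
          (∑ i, 2 * (a i) ^ 2 * ((1 : MonoidAlgebra O P) - X i)) + 2 * w := by
  intro a P x X k Jk
  have hP : ∀ g : P, g * g = 1 := fun g => funext fun i => CharTwo.add_self_eq_zero (g i).toAdd
  have hX : ∀ i, X i * X i = 1 := fun i => single_one_mul_self_of_mul_self_eq_one (hP (x i))
  have hJ : ∀ i, a i * (1 - X i) ∈ augmentationIdeal O P := fun i =>
    Ideal.mul_mem_left _ _ (one_sub_single_one_mem_augmentationIdeal _)
  obtain ⟨w, ⟨hwJ, hwk⟩, hsq⟩ := exists_mem_sq_sum_eq_sum_sq_add_two_mul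
    (augmentationIdealTwo O P) Finset.univ (fun i => a i * (1 - X i))
    fun i _ j _ _ => mul_mem_augmentationIdealTwo (hJ i) (hJ j)
  -- `hwk` is about `mapRingHom`, which unfolds to the `ofCoeff`/`mapRange` form above.
  refine ⟨w, hwJ, hwk, hsq.trans ?_⟩
  refine congrArg (· + 2 * w) (Finset.sum_congr rfl fun i _ => ?_)
  rw [mul_pow, sq (1 - X i), one_sub_mul_self_of_mul_self_eq_one (hX i)]
  ring

/-- let `p = 2`, `P = (C₂)^m` with basis `x₁, …, x_m`, and `O` a complete
discrete valuation ring of mixed characteristic `(0,2)` with residue field `k`. For any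
`a₁, …, a_m ∈ OP` one has
`(∑ aᵢ(1 - xᵢ))² ≡ ∑ 2aᵢ²(1 - xᵢ)  (mod 2·J_{O,2}(P))`,
where `J_{O,2}(P)` is the set of elements of the augmentation ideal of `OP` whose reduction
to `kP` lies in `J(kP)²` (for `J(kP)` the augmentation ideal of `kP`). -/
theorem stmt8 (m : ℕ) (O : Type*) [CommRing O] [IsDomain O] [IsDiscreteValuationRing O]
    [CharZero O] [IsAdicComplete (IsLocalRing.maximalIdeal O) O]
    (hpO : ¬ IsUnit (2 : O)) :
    ∀ a : Fin m → MonoidAlgebra O (Fin m → Multiplicative (ZMod 2)),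
      let P := Fin m → Multiplicative (ZMod 2)
      let x : Fin m → P := fun i => Pi.mulSingle i (Multiplicative.ofAdd (1 : ZMod 2))
      let X : Fin m → MonoidAlgebra O P := fun i => MonoidAlgebra.single (x i) (1 : O)
      let k := IsLocalRing.ResidueField O
      let Jk : Ideal (MonoidAlgebra k P) :=
        RingHom.ker ((MonoidAlgebra.lift k k P) 1).toRingHom
      ∃ w : MonoidAlgebra O P,
        w ∈ RingHom.ker ((MonoidAlgebra.lift O O P) 1).toRingHom ∧
        (MonoidAlgebra.ofCoeff (Finsupp.mapRange (IsLocalRing.residue O) (map_zero _) w.coeff) : MonoidAlgebra k P)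
            ∈ Jk * Jk ∧
        (∑ i, a i * ((1 : MonoidAlgebra O P) - X i)) ^ 2 =
          (∑ i, 2 * (a i) ^ 2 * ((1 : MonoidAlgebra O P) - X i)) + 2 * w :=
  stmt8_general m O
end

section
/- Let E be a finite group with a central cyclic subgroup Z such that E/Z is abelian, and let φ be a faithful irreducible (hence linear) character of Z. If χ₁, χ₂ are irreducible characters of E lying over φ (i.e., whose restriction to Z is a multiple of φ), then there exists an irreducible character θ of E with Z in its kernel such that χ₁·θ = χ₂. -/
/-!
The group `E` acts on `Hom(V₁, V₂)` by `f ↦ ρ₂ g ∘ f ∘ ρ₁ g⁻¹`. Since `Z` is central, Schur's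
lemma makes it act on `V₁` and on `V₂` by the same scalars `φ z`, so it acts trivially on
`Hom(V₁, V₂)` and the action factors through the abelian group `E/Z`. These commuting operators
have finite order, hence are semisimple, and so share an eigenvector `f ≠ 0`; its eigenvalues form
a linear character `θ` trivial on `Z`. Then `f` is a nonzero map from the twist `V₁ ⊗ θ` to `V₂`.
The twist is irreducible because its character has the same norm as `χ₁`, so `f` is an
isomorphism and `χ₂ = θ χ₁`.
-/

/-- `χ : G → ℂ` is an irreducible character: it is the character of a simple
finite-dimensional complex representation of `G`. -/
def IsIrrChar (G : Type) [Group G] (χ : G → ℂ) : Prop :=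
  ∃ V : FDRep ℂ G, CategoryTheory.Simple V ∧ χ = V.character

open CategoryTheory

namespace Module.End

variable {K M : Type*} [Field K] [AddCommGroup M] [Module K M]

theorem isSemisimple_of_pow_eq_one [CharZero K] {f : End K M} {n : ℕ} (hn : n ≠ 0)
    (hf : f ^ n = 1) : f.IsSemisimple :=
  isSemisimple_of_squarefree_aeval_eq_zero
    (Polynomial.separable_X_pow_sub_C 1 (Nat.cast_ne_zero.mpr hn) one_ne_zero).squarefree
    (by simp [hf])

theorem exists_common_eigenvector [IsAlgClosed K] [FiniteDimensional K M] [Nontrivial M]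
    {ι : Type*} (f : ι → End K M) (hcomm : ∀ i j, Commute (f i) (f j))
    (hss : ∀ i, (f i).IsSemisimple) :
    ∃ v : M, v ≠ 0 ∧ ∃ μ : ι → K, ∀ i, f i v = μ i • v := by
  have htop := iSup_iInf_maxGenEigenspace_eq_top_of_iSup_maxGenEigenspace_eq_top_of_commute f
    (fun i j _ ↦ hcomm i j) (fun i ↦ iSup_maxGenEigenspace_eq_top (f i))
  obtain ⟨μ, hμ⟩ : ∃ μ : ι → K, ⨅ i, (f i).maxGenEigenspace (μ i) ≠ ⊥ := by
    by_contra! h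
    simp [h] at htop
  obtain ⟨v, hv, hv0⟩ := Submodule.exists_mem_ne_zero_of_ne_bot hμ
  refine ⟨v, hv0, μ, fun i ↦ mem_eigenspace_iff.mp ?_⟩
  rw [← (hss i).isFinitelySemisimple.maxGenEigenspace_eq_eigenspace]
  exact Submodule.mem_iInf _ |>.mp hv i

end Module.End

theorem MonoidHom.commute_apply_of_le_ker {G M : Type*} [Group G] [Monoid M] (ρ : G →* M)
    {N : Subgroup G} [N.Normal] (hN : N ≤ ρ.ker) (hab : ∀ a b : G ⧸ N, a * b = b * a)
    (g h : G) : Commute (ρ g) (ρ h) := by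
  have hmem : (h * g)⁻¹ * (g * h) ∈ N := QuotientGroup.eq.mp (by simpa using hab h g)
  rw [Commute, SemiconjBy, ← map_mul, ← map_mul, ← mul_inv_cancel_left (h * g) (g * h),
    map_mul _ (h * g), MonoidHom.mem_ker.mp (hN hmem), mul_one]

namespace Representation

variable {k G V : Type*} [Field k] [AddCommGroup V] [Module k V]

theorem exists_eigenvector_of_commute [Group G] [Finite G] [IsAlgClosed k] [CharZero k]
    [FiniteDimensional k V] [Nontrivial V] (ρ : Representation k G V)
    (hcomm : ∀ g h, Commute (ρ g) (ρ h)) :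
    ∃ v : V, v ≠ 0 ∧ ∃ θ : G →* k, ∀ g, ρ g v = θ g • v := by
  have hss (g : G) : Module.End.IsSemisimple (ρ g) :=
    Module.End.isSemisimple_of_pow_eq_one (orderOf_pos g).ne'
      (by rw [← map_pow, pow_orderOf_eq_one, map_one])
  obtain ⟨v, hv0, μ, hμ⟩ := Module.End.exists_common_eigenvector (fun g ↦ ρ g) hcomm hss
  have hinj : Function.Injective (· • v : k → V) := smul_left_injective k hv0
  refine ⟨v, hv0, ⟨⟨μ, hinj ?_⟩, fun g h ↦ hinj ?_⟩, hμ⟩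
  · change μ 1 • v = (1 : k) • v
    rw [← hμ, map_one, one_smul, Module.End.one_apply]
  · change μ (g * h) • v = (μ g * μ h) • v
    rw [← hμ, map_mul, Module.End.mul_apply, hμ, map_smul, hμ, smul_smul, mul_comm]

theorem linHom_eq_one_of_eq_smul_one {W : Type*} [AddCommGroup W] [Module k W] [Group G]
    (ρ : Representation k G V) (σ : Representation k G W) {Z : Subgroup G} (φ : Z →* kˣ)
    (hρ : ∀ z : Z, ρ z = (φ z : k) • 1) (hσ : ∀ z : Z, σ z = (φ z : k) • 1) (z : Z) :
    linHom ρ σ z = 1 := by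
  ext f x
  rw [linHom_apply, ← Subgroup.coe_inv, hρ, hσ]
  simp [smul_smul]

/-- The twist `ρ ⊗ θ` of `ρ` by a linear character `θ`, realised on the space of `ρ`. -/
def twist [Monoid G] (ρ : Representation k G V) (θ : G →* k) : Representation k G V where
  toFun g := θ g • ρ g
  map_one' := by simp
  map_mul' g h := by rw [map_mul, map_mul, smul_mul_smul_comm]

@[simp]
theorem twist_apply [Monoid G] (ρ : Representation k G V) (θ : G →* k) (g : G) :
    ρ.twist θ g = θ g • ρ g := rfl

end Representation

namespace FDRep

universe u

variable {k G : Type u} [Field k] [Group G]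

def homMk {V W : FDRep k G} (f : V →ₗ[k] W) (hf : ∀ g, f ∘ₗ V.ρ g = W.ρ g ∘ₗ f) :
    V ⟶ W where
  hom := FGModuleCat.ofHom f
  comm g := by ext x; exact LinearMap.congr_fun (hf g) x

theorem nontrivial_of_simple (V : FDRep k G) [Simple V] : Nontrivial V := by
  by_contra h
  rw [not_nontrivial_iff_subsingleton] at h
  exact id_nonzero V (by ext x; exact Subsingleton.elim _ _)

theorem exists_ρ_eq_smul_one_of_mem_center [IsAlgClosed k] (V : FDRep k G) [Simple V] {z : G}
    (hz : z ∈ Subgroup.center G) : ∃ c : k, V.ρ z = c • 1 := by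
  have hcomm (g : G) : V.ρ z ∘ₗ V.ρ g = V.ρ g ∘ₗ V.ρ z := by
    rw [← Module.End.mul_eq_comp, ← Module.End.mul_eq_comp, ← map_mul, ← map_mul,
      Subgroup.mem_center_iff.mp hz g]
  obtain ⟨c, hc⟩ := endomorphism_simple_eq_smul_id k (homMk (V.ρ z) hcomm)
  exact ⟨c, LinearMap.ext fun x ↦ (congrArg (fun m ↦ m.hom x) hc).symm⟩

theorem ρ_eq_smul_one_of_mem_center [IsAlgClosed k] [CharZero k] (V : FDRep k G) [Simple V]
    {z : G} (hz : z ∈ Subgroup.center G) {a : k} (ha : V.character z = V.character 1 * a) :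
    V.ρ z = a • 1 := by
  obtain ⟨c, hc⟩ := exists_ρ_eq_smul_one_of_mem_center V hz
  have := nontrivial_of_simple V
  have hdim : (Module.finrank k V : k) ≠ 0 := Nat.cast_ne_zero.mpr Module.finrank_pos.ne'
  rw [character, hc, char_one, map_smul, LinearMap.trace_one, smul_eq_mul, mul_comm] at ha
  rw [hc, mul_left_cancel₀ hdim ha]

theorem twist_character (V : FDRep k G) (θ : G →* k) (g : G) :
    (of (Representation.twist V.ρ θ)).character g = θ g * V.character g := by
  simp [character]

theorem simple_twist [Fintype G] [IsAlgClosed k] [CharZero k] (V : FDRep k G) [hV : Simple V]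
    (θ : G →* k) : Simple (of (Representation.twist V.ρ θ)) := by
  have hθ (g : G) : θ g * θ g⁻¹ = 1 := by rw [← map_mul, mul_inv_cancel, map_one]
  rw [simple_iff_char_is_norm_one] at hV ⊢
  convert hV using 2 with g
  rw [twist_character, twist_character, mul_mul_mul_comm, hθ, one_mul]

theorem character_eq_of_linHom_apply_eq_smul [Fintype G] [IsAlgClosed k] [CharZero k]
    (V W : FDRep k G) [Simple V] [Simple W] (θ : G →* k) {f : V →ₗ[k] W} (hf : f ≠ 0)
    (h : ∀ g, Representation.linHom V.ρ W.ρ g f = θ g • f) (g : G) :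
    W.character g = θ g * V.character g := by
  have hint (g : G) : f ∘ₗ Representation.twist V.ρ θ g = W.ρ g ∘ₗ f := by
    ext x
    simpa [Representation.linHom_apply, ← Module.End.mul_apply, ← map_mul] using
      (LinearMap.congr_fun (h g) (V.ρ g x)).symm
  let m : of (Representation.twist V.ρ θ) ⟶ W := homMk f hint
  have hm : m ≠ 0 := fun h0 ↦ hf (LinearMap.ext fun x ↦ congrArg (fun m ↦ m.hom x) h0)
  have := simple_twist V θ
  have := isIso_of_hom_simple hm
  rw [← char_iso (asIso m), twist_character]

end FDRep

section

variable {G : Type} [Group G] [Fintype G]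

theorem IsIrrChar.twist {χ : G → ℂ} (h : IsIrrChar G χ) (θ : G →* ℂ) :
    IsIrrChar G fun g ↦ θ g * χ g := by
  obtain ⟨V, _, rfl⟩ := h
  exact ⟨_, FDRep.simple_twist V θ, funext fun g ↦ (FDRep.twist_character V θ g).symm⟩

theorem isIrrChar_one : IsIrrChar G 1 := by
  have hchar (g : G) : (FDRep.of (Representation.trivial ℂ G ℂ)).character g = 1 := by
    simp [FDRep.character]
  refine ⟨FDRep.of (Representation.trivial ℂ G ℂ), ?_, funext fun g ↦ (hchar g).symm⟩
  simp [FDRep.simple_iff_char_is_norm_one, hchar]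

theorem isIrrChar_monoidHom (θ : G →* ℂ) : IsIrrChar G θ := by
  simpa using isIrrChar_one.twist θ

end

theorem stmt9_general (E : Type) [Group E] [Fintype E] (Z : Subgroup E) [Z.Normal]
    (hZc : Z ≤ Subgroup.center E)
    (hab : ∀ a b : E ⧸ Z, a * b = b * a)
    (φ : Z →* ℂˣ)
    (χ₁ χ₂ : E → ℂ) (h1 : IsIrrChar E χ₁) (h2 : IsIrrChar E χ₂)
    (hov1 : ∀ z : Z, χ₁ (z : E) = χ₁ 1 * (φ z : ℂ))
    (hov2 : ∀ z : Z, χ₂ (z : E) = χ₂ 1 * (φ z : ℂ)) :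
    ∃ θ : E → ℂ, IsIrrChar E θ ∧ (∀ z : Z, θ (z : E) = θ 1) ∧
      ∀ g : E, χ₁ g * θ g = χ₂ g := by
  obtain ⟨V₁, _, rfl⟩ := h1
  obtain ⟨V₂, _, rfl⟩ := h2
  have hZ := Representation.linHom_eq_one_of_eq_smul_one V₁.ρ V₂.ρ φ
    (fun z ↦ FDRep.ρ_eq_smul_one_of_mem_center V₁ (hZc z.2) (hov1 z))
    (fun z ↦ FDRep.ρ_eq_smul_one_of_mem_center V₂ (hZc z.2) (hov2 z))
  have hcomm := (Representation.linHom V₁.ρ V₂.ρ).commute_apply_of_le_ker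
    (fun n hn ↦ MonoidHom.mem_ker.mpr (hZ ⟨n, hn⟩)) hab
  have := FDRep.nontrivial_of_simple V₁
  have := FDRep.nontrivial_of_simple V₂
  obtain ⟨f, hf, θ, hθ⟩ := Representation.exists_eigenvector_of_commute _ hcomm
  refine ⟨θ, isIrrChar_monoidHom θ, fun z ↦ ?_, fun g ↦ ?_⟩
  · have : θ z • f = (1 : ℂ) • f := by rw [← hθ, hZ, one_smul, Module.End.one_apply]
    rw [smul_left_injective ℂ hf this, map_one]
  · rw [FDRep.character_eq_of_linHom_apply_eq_smul V₁ V₂ θ hf hθ, mul_comm]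

/-- let `E` be a finite group, `Z` a central cyclic subgroup with `E/Z`
abelian, and `φ` a faithful linear character of `Z`. If `χ₁, χ₂` are irreducible characters
of `E` lying over `φ`, then there is an irreducible character `θ` of `E` with `Z` in its
kernel such that `χ₁·θ = χ₂`. -/
theorem stmt9 (E : Type) [Group E] [Fintype E] (Z : Subgroup E) [Z.Normal]
    (hZc : Z ≤ Subgroup.center E) (hZcyc : IsCyclic Z)
    (hab : ∀ a b : E ⧸ Z, a * b = b * a)
    (φ : Z →* ℂˣ) (hφ : Function.Injective φ)
    (χ₁ χ₂ : E → ℂ) (h1 : IsIrrChar E χ₁) (h2 : IsIrrChar E χ₂)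
    (hov1 : ∀ z : Z, χ₁ (z : E) = χ₁ 1 * (φ z : ℂ))
    (hov2 : ∀ z : Z, χ₂ (z : E) = χ₂ 1 * (φ z : ℂ)) :
    ∃ θ : E → ℂ, IsIrrChar E θ ∧ (∀ z : Z, θ (z : E) = θ 1) ∧
      ∀ g : E, χ₁ g * θ g = χ₂ g :=
  stmt9_general E Z hZc hab φ χ₁ χ₂ h1 h2 hov1 hov2
end

section
/- Let E be a finite group with a central cyclic subgroup Z such that E/Z is abelian, and let φ be a faithful linear character of Z. Then for every g ∈ E \ Z(E), the sum over coset representatives h of C_E(g) in E of h^{-1}gh·e_φ equals g·(Σ_{z ∈ [g,E]} φ(z))·e_φ = 0 in the group algebra ℂE·e_φ; consequently the center of ℂE·e_φ equals ℂZ(E)·e_φ, where e_φ is the central idempotent of ℂZ corresponding to φ. -/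
/-!
Since `e_φ` is a combination of central elements and `z·e_φ = φ(z)·e_φ` for `z ∈ Z`, writing
`h⁻¹gh = g·[g,h]` gives `(∑_h h⁻¹gh)·e_φ = g·(∑_h φ[g,h])·e_φ`. As the commutators `[g,h]` are
central, `h ↦ [g,h]` is a homomorphism `E → Z`, so `h ↦ φ[g,h]` is a linear character of `E`;
it is nontrivial for `g ∉ Z(E)` because `φ` is faithful, hence its sum vanishes.

An element `a = a·e_φ` central in `ℂE·e_φ` is central in `ℂE`, so averaging over conjugation
gives `|E|·a = ∑_g a_g (∑_h h⁻¹gh)·e_φ`, in which only the central `g` survive.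
-/

section Commutator

variable {G : Type*} [Group G] {Z : Subgroup G}

-- `g⁻¹h⁻¹gh` is `⁅g⁻¹, h⁻¹⁆` in Mathlib's convention `⁅g, h⁆ = g h g⁻¹ h⁻¹`.
def Subgroup.commutatorHom (hZ : Z ≤ Subgroup.center G) (g : G)
    (hg : ∀ h : G, g⁻¹ * h⁻¹ * g * h ∈ Z) : G →* Z where
  toFun h := ⟨g⁻¹ * h⁻¹ * g * h, hg h⟩
  map_one' := by ext; simp
  map_mul' h₁ h₂ := by
    have hc := Subgroup.mem_center_iff.mp (hZ (hg h₁))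
    ext
    calc g⁻¹ * (h₁ * h₂)⁻¹ * g * (h₁ * h₂)
        = g⁻¹ * h₂⁻¹ * g * ((g⁻¹ * h₁⁻¹ * g * h₁) * h₂) := by group
      _ = (g⁻¹ * h₂⁻¹ * g * h₂) * (g⁻¹ * h₁⁻¹ * g * h₁) := by rw [← hc h₂]; group
      _ = (g⁻¹ * h₁⁻¹ * g * h₁) * (g⁻¹ * h₂⁻¹ * g * h₂) := hc _

theorem sum_units_commutator_eq_zero {k : Type*} [CommRing k] [IsDomain k] [Fintype G]
    (hZ : Z ≤ Subgroup.center G) {g : G} (hg : ∀ h : G, g⁻¹ * h⁻¹ * g * h ∈ Z)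
    (hgc : g ∉ Subgroup.center G) (φ : Z →* kˣ) (hφ : Function.Injective φ) :
    ∑ h : G, (φ ⟨g⁻¹ * h⁻¹ * g * h, hg h⟩ : k) = 0 := by
  refine sum_hom_units_eq_zero ((Units.coeHom k).comp (φ.comp (Subgroup.commutatorHom hZ g hg)))
    fun hχ => hgc (Subgroup.mem_center_iff.mpr fun h => ?_)
  have hφ1 : φ (Subgroup.commutatorHom hZ g hg h) = 1 := Units.ext (DFunLike.congr_fun hχ h)
  have h1 : g⁻¹ * h⁻¹ * g * h = 1 := congrArg Subtype.val ((map_eq_one_iff φ hφ).mp hφ1)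
  calc h * g = h * g * (g⁻¹ * h⁻¹ * g * h) := by rw [h1, mul_one]
    _ = g * h := by group

end Commutator

theorem Subalgebra.mem_center_of_mul_eq_self_of_forall_comm_mul {R A : Type*} [CommSemiring R]
    [Semiring A] [Algebra R A] {a e : A} (he : e ∈ Subalgebra.center R A) (ha : a * e = a)
    (hcomm : ∀ b : A, a * (b * e) = b * e * a) : a ∈ Subalgebra.center R A := by
  have he' := Subalgebra.mem_center_iff.mp he
  refine Subalgebra.mem_center_iff.mpr fun b => ?_
  calc b * a = b * (e * a) := by rw [← he' a, ha]
    _ = a * (b * e) := by rw [hcomm, mul_assoc]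
    _ = a * b := by rw [he' b, ← mul_assoc, ha]

namespace MonoidAlgebra

variable {k G : Type*} [CommSemiring k] [Group G]

-- `|C_G(g)|` times the class sum of `g`.
noncomputable def conjSum (k : Type*) [Semiring k] [Fintype G] (g : G) : MonoidAlgebra k G :=
  ∑ h : G, single (h⁻¹ * g * h) 1

theorem single_one_mem_center {g : G} (hg : g ∈ Subgroup.center G) :
    single g (1 : k) ∈ Subalgebra.center k (MonoidAlgebra k G) :=
  Subalgebra.mem_center_iff.mpr fun b =>
    (single_commute (fun m => (Subgroup.mem_center_iff.mp hg m).symm) .one_left b).eq.symm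

section Fintype

variable [Fintype G]

theorem sum_coeff_smul_single_one (a : MonoidAlgebra k G) :
    ∑ g : G, a.coeff g • single g (1 : k) = a := by
  ext1
  simp [Finsupp.univ_sum_single]

theorem conjSum_of_mem_center {g : G} (hg : g ∈ Subgroup.center G) :
    conjSum k g = (Fintype.card G : k) • single g 1 := by
  have hconj (h : G) : h⁻¹ * g * h = g := by
    rw [mul_assoc, ← Subgroup.mem_center_iff.mp hg h, inv_mul_cancel_left]
  simp [conjSum, hconj, Nat.cast_smul_eq_nsmul]

theorem single_inv_mul_mul_single (a : MonoidAlgebra k G) (h : G) :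
    single h⁻¹ 1 * a * single h 1 = ∑ g : G, a.coeff g • single (h⁻¹ * g * h) (1 : k) := by
  conv_lhs => rw [← sum_coeff_smul_single_one a]
  simp [Finset.mul_sum, Finset.sum_mul]

theorem card_smul_eq_sum_coeff_smul_conjSum {a : MonoidAlgebra k G}
    (ha : a ∈ Subalgebra.center k (MonoidAlgebra k G)) :
    (Fintype.card G : k) • a = ∑ g : G, a.coeff g • conjSum k g := by
  have hconj (h : G) : single h⁻¹ 1 * a * single h (1 : k) = a := by
    rw [mul_assoc, ← Subalgebra.mem_center_iff.mp ha, ← mul_assoc, single_mul_single,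
      inv_mul_cancel, one_mul, ← one_def, one_mul]
  calc (Fintype.card G : k) • a = ∑ h : G, single h⁻¹ 1 * a * single h (1 : k) := by
        simp [hconj, Nat.cast_smul_eq_nsmul]
    _ = ∑ h : G, ∑ g : G, a.coeff g • single (h⁻¹ * g * h) (1 : k) := by
        simp_rw [single_inv_mul_mul_single]
    _ = ∑ g : G, a.coeff g • conjSum k g := by
        rw [Finset.sum_comm]
        simp [conjSum, Finset.smul_sum]

end Fintype

section CharIdempotent

variable {k G : Type*} [Field k] [Group G]

noncomputable def charIdempotent (Z : Subgroup G) [Fintype Z] (φ : Z →* kˣ) :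
    MonoidAlgebra k G :=
  (Fintype.card Z : k)⁻¹ • ∑ z : Z, ((φ z⁻¹ : kˣ) : k) • single (z : G) (1 : k)

variable {Z : Subgroup G} [Fintype Z] (φ : Z →* kˣ)

theorem charIdempotent_mem_center (hZ : Z ≤ Subgroup.center G) :
    charIdempotent Z φ ∈ Subalgebra.center k (MonoidAlgebra k G) :=
  Subalgebra.smul_mem _ (Subalgebra.sum_mem _ fun z _ =>
    Subalgebra.smul_mem _ (single_one_mem_center (hZ z.2)) _) _

theorem single_mul_charIdempotent (z : Z) :
    single (z : G) (1 : k) * charIdempotent Z φ = (φ z : k) • charIdempotent Z φ := by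
  rw [charIdempotent, mul_smul_comm, smul_comm (φ z : k) (Fintype.card Z : k)⁻¹]
  congr 1
  rw [Finset.mul_sum, Finset.smul_sum]
  refine Fintype.sum_equiv (Equiv.mulLeft z) _ _ fun w => ?_
  have hφ : (φ z : k) * φ (z * w)⁻¹ = φ w⁻¹ := by
    rw [← Units.val_mul, mul_comm, ← map_mul, mul_inv_rev, inv_mul_cancel_right]
  rw [mul_smul_comm, single_mul_single, one_mul, smul_smul, Equiv.coe_mulLeft, hφ,
    Subgroup.coe_mul]

theorem span_single_mul_charIdempotent_le_center (hZ : Z ≤ Subgroup.center G) :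
    Submodule.span k {v | ∃ z ∈ Subgroup.center G, v = single z 1 * charIdempotent Z φ} ≤
      Subalgebra.toSubmodule (Subalgebra.center k (MonoidAlgebra k G)) :=
  Submodule.span_le.mpr <| by
    rintro _ ⟨z, hz, rfl⟩
    exact Subalgebra.mul_mem _ (single_one_mem_center hz) (charIdempotent_mem_center φ hZ)

variable [Fintype G]

theorem conjSum_mul_charIdempotent {g : G} (hg : ∀ h : G, g⁻¹ * h⁻¹ * g * h ∈ Z) :
    conjSum k g * charIdempotent Z φ =
      single g 1 * ((∑ h : G, (φ ⟨g⁻¹ * h⁻¹ * g * h, hg h⟩ : k)) • charIdempotent Z φ) := by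
  rw [conjSum, Finset.sum_mul, Finset.sum_smul, Finset.mul_sum]
  refine Finset.sum_congr rfl fun h _ => ?_
  have hconj : h⁻¹ * g * h = g * (g⁻¹ * h⁻¹ * g * h) := by group
  rw [← single_mul_charIdempotent, ← mul_assoc, single_mul_single, one_mul, ← hconj]

theorem conjSum_mul_charIdempotent_eq_zero (hZ : Z ≤ Subgroup.center G)
    (hφ : Function.Injective φ) {g : G} (hg : ∀ h : G, g⁻¹ * h⁻¹ * g * h ∈ Z)
    (hgc : g ∉ Subgroup.center G) : conjSum k g * charIdempotent Z φ = 0 := by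
  rw [conjSum_mul_charIdempotent φ hg, sum_units_commutator_eq_zero hZ hg hgc φ hφ,
    zero_smul, mul_zero]

theorem mem_span_single_mul_charIdempotent_of_mem_center (hG : (Fintype.card G : k) ≠ 0)
    (hZ : Z ≤ Subgroup.center G) (hcomm : ∀ g h : G, g⁻¹ * h⁻¹ * g * h ∈ Z)
    (hφ : Function.Injective φ) {a : MonoidAlgebra k G}
    (ha : a ∈ Subalgebra.center k (MonoidAlgebra k G)) :
    a * charIdempotent Z φ ∈ Submodule.span k
      {v | ∃ z ∈ Subgroup.center G, v = single z 1 * charIdempotent Z φ} := by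
  have hav : a * charIdempotent Z φ =
      (Fintype.card G : k)⁻¹ • ∑ g : G, a.coeff g • (conjSum k g * charIdempotent Z φ) := by
    conv_lhs => rw [← inv_smul_smul₀ hG a, card_smul_eq_sum_coeff_smul_conjSum ha]
    simp only [smul_mul_assoc, Finset.sum_mul]
  rw [hav]
  refine Submodule.smul_mem _ _ (Submodule.sum_mem _ fun g _ => Submodule.smul_mem _ _ ?_)
  by_cases hg : g ∈ Subgroup.center G
  · rw [conjSum_of_mem_center hg, smul_mul_assoc]
    exact Submodule.smul_mem _ _ (Submodule.subset_span ⟨g, hg, rfl⟩)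
  · rw [conjSum_mul_charIdempotent_eq_zero φ hZ hφ (hcomm g) hg]
    exact Submodule.zero_mem _

end CharIdempotent

end MonoidAlgebra

theorem stmt10_general (E : Type*) [Group E] [Fintype E] (Z : Subgroup E) [Fintype Z]
    (hZc : Z ≤ Subgroup.center E)
    (hcomm : ∀ g h : E, g⁻¹ * h⁻¹ * g * h ∈ Z)
    (φ : Z →* ℂˣ) (hφ : Function.Injective φ) :
    let e : MonoidAlgebra ℂ E :=
      (Fintype.card Z : ℂ)⁻¹ •
        ∑ z : Z, ((φ z⁻¹ : ℂˣ) : ℂ) • MonoidAlgebra.single (z : E) (1 : ℂ)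
    (∀ g : E, g ∉ Subgroup.center E →
      (∑ h : E, MonoidAlgebra.single (h⁻¹ * g * h) (1 : ℂ)) * e =
          MonoidAlgebra.single g (1 : ℂ) *
            ((∑ h : E, ((φ ⟨g⁻¹ * h⁻¹ * g * h, hcomm g h⟩ : ℂˣ) : ℂ)) • e) ∧
        (∑ h : E, MonoidAlgebra.single (h⁻¹ * g * h) (1 : ℂ)) * e = 0) ∧
      ∀ a : MonoidAlgebra ℂ E, a * e = a →
        ((∀ b : MonoidAlgebra ℂ E, a * (b * e) = (b * e) * a) ↔
          a ∈ Submodule.span ℂ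
            {v : MonoidAlgebra ℂ E | ∃ z ∈ Subgroup.center E,
              v = MonoidAlgebra.single z (1 : ℂ) * e}) := by
  intro e
  refine ⟨fun g hg => ⟨MonoidAlgebra.conjSum_mul_charIdempotent φ (hcomm g),
    MonoidAlgebra.conjSum_mul_charIdempotent_eq_zero φ hZc hφ (hcomm g) hg⟩,
    fun a ha => ⟨fun hcen => ?_, fun hspan b => ?_⟩⟩
  · have hG : (Fintype.card E : ℂ) ≠ 0 := Nat.cast_ne_zero.mpr Fintype.card_ne_zero
    have ha_center := Subalgebra.mem_center_of_mul_eq_self_of_forall_comm_mul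
      (MonoidAlgebra.charIdempotent_mem_center φ hZc) ha hcen
    rw [← ha]
    exact MonoidAlgebra.mem_span_single_mul_charIdempotent_of_mem_center φ hG hZc hcomm hφ
      ha_center
  · exact ((Subalgebra.mem_center_iff (R := ℂ)).mp
      (MonoidAlgebra.span_single_mul_charIdempotent_le_center φ hZc hspan) (b * e)).symm

/-- let `E` be a finite group, `Z` a central cyclic subgroup with `E/Z`
abelian and `φ` a faithful linear character of `Z`, with central idempotent
`e_φ = |Z|⁻¹ ∑_z φ(z⁻¹) z ∈ ℂE`. For every `g ∉ Z(E)`, the sum of the conjugates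
`h⁻¹gh·e_φ` equals `g·(∑_{h} φ([g,h]))·e_φ`, and this is `0`; consequently the centre of
`ℂE·e_φ` is `ℂZ(E)·e_φ`. -/
theorem stmt10 (E : Type*) [Group E] [Fintype E] (Z : Subgroup E) [Fintype Z]
    (hZc : Z ≤ Subgroup.center E) (hZcyc : IsCyclic Z)
    (hcomm : ∀ g h : E, g⁻¹ * h⁻¹ * g * h ∈ Z)
    (φ : Z →* ℂˣ) (hφ : Function.Injective φ) :
    let e : MonoidAlgebra ℂ E :=
      (Fintype.card Z : ℂ)⁻¹ •
        ∑ z : Z, ((φ z⁻¹ : ℂˣ) : ℂ) • MonoidAlgebra.single (z : E) (1 : ℂ)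
    (∀ g : E, g ∉ Subgroup.center E →
      (∑ h : E, MonoidAlgebra.single (h⁻¹ * g * h) (1 : ℂ)) * e =
          MonoidAlgebra.single g (1 : ℂ) *
            ((∑ h : E, ((φ ⟨g⁻¹ * h⁻¹ * g * h, hcomm g h⟩ : ℂˣ) : ℂ)) • e) ∧
        (∑ h : E, MonoidAlgebra.single (h⁻¹ * g * h) (1 : ℂ)) * e = 0) ∧
      ∀ a : MonoidAlgebra ℂ E, a * e = a →
        ((∀ b : MonoidAlgebra ℂ E, a * (b * e) = (b * e) * a) ↔
          a ∈ Submodule.span ℂ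
            {v : MonoidAlgebra ℂ E | ∃ z ∈ Subgroup.center E,
              v = MonoidAlgebra.single z (1 : ℂ) * e}) :=
  stmt10_general E Z hZc hcomm φ hφ
end

section
/- Let E be a finite group with central cyclic Z ≤ Z(E), E/Z abelian, φ a faithful linear character of Z, χ ∈ Irr(E, φ) and θ ∈ Irr(E, 1_Z) (an irreducible character with Z in its kernel). Then χ·θ = χ if and only if θ has Z(E) in its kernel and θ is linear, i.e., θ ∈ Irr(E, 1_{Z(E)}). -/
/-!
By Schur's lemma a central element `z` acts on a simple representation `V` by a scalar, so
`χ (g * z) χ(1) = χ z χ g` for `χ = V.character`. In particular `χ` does not vanish on the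
centre. If `g` is not central, pick `h` not commuting with it; the commutator `w` lies in `Z`,
is nontrivial, and `χ (g * w) = χ g` because `g * w` is conjugate to `g`. Since `φ` is faithful,
`χ w ≠ χ 1`, which forces `χ g = 0`. Thus `χ` vanishes exactly off `Z(E)`, and `χ θ = χ` says
precisely that `θ = 1` on `Z(E)`.
-/

open CategoryTheory

namespace FDRep

variable {k G : Type} [Field k] [Group G] (V : FDRep k G)

theorem exists_ρ_eq_smul_id_of_mem_center [IsAlgClosed k] [Simple V] {z : G}
    (hz : z ∈ Subgroup.center G) : ∃ c : k, V.ρ z = c • LinearMap.id := by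
  let f : V ⟶ V := ⟨InducedCategory.homMk (ModuleCat.ofHom (V.ρ z)), fun g => by
    ext v
    change V.ρ z (V.ρ g v) = V.ρ g (V.ρ z v)
    rw [← Module.End.mul_apply, ← Module.End.mul_apply, ← map_mul, ← map_mul,
      Subgroup.mem_center_iff.mp hz]⟩
  obtain ⟨c, hc⟩ := endomorphism_simple_eq_smul_id k f
  exact ⟨c, (congrArg (fun e => e.hom.hom.hom) hc).symm⟩

theorem character_mul_mul_character_one [IsAlgClosed k] [Simple V] {z : G}
    (hz : z ∈ Subgroup.center G) (g : G) :
    V.character (g * z) * V.character 1 = V.character z * V.character g := by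
  obtain ⟨c, hc⟩ := V.exists_ρ_eq_smul_id_of_mem_center hz
  have hmul : ∀ x : G, V.character (x * z) = c * V.character x := fun x => by
    change LinearMap.trace k V (V.ρ (x * z)) = c * LinearMap.trace k V (V.ρ x)
    rw [map_mul, hc, mul_smul_comm, Module.End.mul_eq_comp, LinearMap.comp_id, map_smul,
      smul_eq_mul]
  have hz' : V.character z = c * V.character 1 := by simpa using hmul 1
  rw [hmul, hz']
  ring

theorem character_one_ne_zero [CharZero k] [Simple V] : V.character 1 ≠ 0 := by
  have : Nontrivial V := by
    by_contra h
    have := not_nontrivial_iff_subsingleton.mp h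
    exact id_nonzero V (by ext v; exact Subsingleton.elim _ _)
  rw [char_one]
  exact_mod_cast Module.finrank_pos.ne'

theorem character_ne_zero_of_mem_center [IsAlgClosed k] [CharZero k] [Simple V] {z : G}
    (hz : z ∈ Subgroup.center G) : V.character z ≠ 0 := by
  intro h
  have := V.character_mul_mul_character_one hz z⁻¹
  rw [inv_mul_cancel, h, zero_mul] at this
  exact V.character_one_ne_zero (mul_self_eq_zero.mp this)

theorem character_eq_zero_of_commutator_mem_center [IsAlgClosed k] [Simple V] {g h : G}
    (hw : g⁻¹ * h⁻¹ * g * h ∈ Subgroup.center G)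
    (hne : V.character (g⁻¹ * h⁻¹ * g * h) ≠ V.character 1) : V.character g = 0 := by
  have hconj : V.character (g * (g⁻¹ * h⁻¹ * g * h)) = V.character g := by
    rw [show g * (g⁻¹ * h⁻¹ * g * h) = h⁻¹ * g * h⁻¹⁻¹ by group, char_conj]
  have := V.character_mul_mul_character_one hw g
  rw [hconj] at this
  have : V.character g * (V.character 1 - V.character (g⁻¹ * h⁻¹ * g * h)) = 0 := by
    linear_combination this
  exact (mul_eq_zero.mp this).resolve_right (sub_ne_zero.mpr hne.symm)

theorem character_ne_zero_iff_mem_center [IsAlgClosed k] [CharZero k] [Simple V]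
    {Z : Subgroup G} (hZc : Z ≤ Subgroup.center G) (hcomm : ∀ g h : G, g⁻¹ * h⁻¹ * g * h ∈ Z)
    (φ : Z →* kˣ) (hφ : Function.Injective φ)
    (hVφ : ∀ z : Z, V.character z = V.character 1 * φ z) (g : G) :
    V.character g ≠ 0 ↔ g ∈ Subgroup.center G := by
  refine ⟨fun hg => ?_, V.character_ne_zero_of_mem_center⟩
  by_contra hgc
  obtain ⟨h, hgh⟩ : ∃ h, h * g ≠ g * h := by simpa [Subgroup.mem_center_iff] using hgc
  let w : Z := ⟨_, hcomm g h⟩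
  have hw : φ w ≠ 1 := fun h1 => hgh <| by
    have : g⁻¹ * h⁻¹ * g * h = 1 := congrArg Subtype.val (hφ (h1.trans (map_one φ).symm))
    rwa [mul_assoc, mul_assoc, inv_mul_eq_one, eq_inv_mul_iff_mul_eq] at this
  refine hg (V.character_eq_zero_of_commutator_mem_center (hZc w.2) ?_)
  rwa [hVφ w, Ne, mul_eq_left₀ V.character_one_ne_zero, ← Units.val_one, Units.val_inj]

end FDRep

theorem stmt12_general (E : Type) [Group E] (Z : Subgroup E)
    (hZc : Z ≤ Subgroup.center E)
    (hcomm : ∀ g h : E, g⁻¹ * h⁻¹ * g * h ∈ Z)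
    (φ : Z →* ℂˣ) (hφ : Function.Injective φ)
    (χ : E → ℂ) (hχ : IsIrrChar E χ)
    (hχφ : ∀ z : Z, χ (z : E) = χ 1 * ((φ z : ℂˣ) : ℂ))
    (θ : E → ℂ) :
    (∀ g : E, χ g * θ g = χ g) ↔
      (θ 1 = 1 ∧ ∀ z : Subgroup.center E, θ (z : E) = θ 1) := by
  obtain ⟨V, hV, rfl⟩ := hχ
  have hfix : (∀ g, V.character g * θ g = V.character g) ↔ ∀ g ∈ Subgroup.center E, θ g = 1 := by
    refine forall_congr' fun g => ?_
    rw [← V.character_ne_zero_iff_mem_center hZc hcomm φ hφ hχφ g]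
    by_cases hg : V.character g = 0 <;> simp [hg, mul_eq_left₀]
  rw [hfix]
  constructor
  · intro hθ
    exact ⟨hθ 1 (one_mem _), fun z => by rw [hθ z z.2, hθ 1 (one_mem _)]⟩
  · rintro ⟨hθ1, hθc⟩ g hg
    rw [hθc ⟨g, hg⟩, hθ1]

/-- let `E` be a finite group with central cyclic `Z`, `E/Z` abelian, `φ` a
faithful linear character of `Z`, `χ ∈ Irr(E, φ)` and `θ ∈ Irr(E, 1_Z)`. Then `χ·θ = χ` if
and only if `θ ∈ Irr(E, 1_{Z(E)})`, i.e. `θ` has `Z(E)` in its kernel (and is then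
linear). -/
theorem stmt12 (E : Type) [Group E] [Fintype E] (Z : Subgroup E)
    (hZc : Z ≤ Subgroup.center E) (hZcyc : IsCyclic Z)
    (hcomm : ∀ g h : E, g⁻¹ * h⁻¹ * g * h ∈ Z)
    (φ : Z →* ℂˣ) (hφ : Function.Injective φ)
    (χ : E → ℂ) (hχ : IsIrrChar E χ)
    (hχφ : ∀ z : Z, χ (z : E) = χ 1 * ((φ z : ℂˣ) : ℂ))
    (θ : E → ℂ) (hθ : IsIrrChar E θ) (hθZ : ∀ z : Z, θ (z : E) = θ 1) :
    (∀ g : E, χ g * θ g = χ g) ↔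
      (θ 1 = 1 ∧ ∀ z : Subgroup.center E, θ (z : E) = θ 1) :=
  stmt12_general E Z hZc hcomm φ hφ χ hχ hχφ θ
end
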